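/- arXiv:2210.08797 — 8 statements merged into one kernel-verified Lean document; each statement's English description precedes it below -/
import Mathlib

section
/- For every integer v ≥ 2, the probability that the waiting time for the first run of 2 consecutive successes equals v satisfies P(V(2) = v) = h_{v-1}·p², where the sequence (h_v) is defined by h_1 = 1, h_2 = q, and h_v = q·h_{v-1} + p·q·h_{v-2} for v ≥ 3. -/
open MeasureTheory Finset

/-- Waiting time for the first success run of length `k`: the smallest `n ≥ k` such that
trials `n - k + 1, …, n` are all successes (trials are indexed from `1`). -/
noncomputable def waitingTime (k : ℕ) (ω : ℕ → Bool) : ℕ :=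
  sInf {n | k ≤ n ∧ ∀ i ∈ Finset.Icc (n - k + 1) n, ω i = true}

noncomputable def Wt (p : ℝ) (m : ℕ) : ℝ :=
  ∑ s ∈ (Finset.Icc 1 m).powerset.filter (fun s => ∀ n ∈ Finset.Icc 2 m, ¬(n - 1 ∈ s ∧ n ∈ s)),
    ∏ i ∈ Finset.Icc 1 m, (if i ∈ s then p else 1 - p)

lemma Wt_zero (p : ℝ) : Wt p 0 = 1 := by
  simp [Wt]

lemma Wt_one (p : ℝ) : Wt p 1 = 1 := by
  have h1 : Finset.Icc 1 1 = ({1} : Finset ℕ) := by decide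
  have h2 : Finset.Icc 2 1 = (∅ : Finset ℕ) := by decide
  have h3 : ({1} : Finset ℕ).powerset = {∅, {1}} := by decide
  rw [Wt, h1, h2, h3]
  rw [Finset.filter_true_of_mem (by simp)]
  rw [Finset.sum_pair (by decide : (∅ : Finset ℕ) ≠ {1})]
  simp

lemma Wt_rec (p : ℝ) (k : ℕ) :
    Wt p (k+2) = (1-p) * Wt p (k+1) + p * (1-p) * Wt p k := by
  rw [Wt]
  rw [← Finset.sum_filter_add_sum_filter_not
    ((Finset.Icc 1 (k+2)).powerset.filter (fun s => ∀ n ∈ Finset.Icc 2 (k+2), ¬(n - 1 ∈ s ∧ n ∈ s)))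
    (fun s => k+2 ∈ s)]
  have hB : ∑ s ∈ (((Finset.Icc 1 (k+2)).powerset.filter
        (fun s => ∀ n ∈ Finset.Icc 2 (k+2), ¬(n - 1 ∈ s ∧ n ∈ s))).filter (fun s => k+2 ∈ s)),
        ∏ i ∈ Finset.Icc 1 (k+2), (if i ∈ s then p else 1 - p)
      = p * (1-p) * Wt p k := by
    rw [Wt, Finset.mul_sum]
    refine Finset.sum_bij' (fun s _ => s.erase (k+2)) (fun s _ => insert (k+2) s) ?_ ?_ ?_ ?_ ?_
    · intro s hs
      simp only [Finset.mem_filter, Finset.mem_powerset] at hs ⊢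
      obtain ⟨⟨hsub, hnc⟩, hmem⟩ := hs
      have hk1 : k+1 ∉ s := by
        have := hnc (k+2) (by simp [Finset.mem_Icc])
        simp at this
        exact fun h => this h hmem
      constructor
      · intro i hi
        simp only [Finset.mem_erase] at hi
        have h1 := hsub hi.2
        simp only [Finset.mem_Icc] at h1 ⊢
        have : i ≠ k+1 := fun h => hk1 (h ▸ hi.2)
        omega
      · intro n hn
        simp only [Finset.mem_Icc] at hn
        have := hnc n (by simp [Finset.mem_Icc]; omega)
        simp only [Finset.mem_erase]
        tauto
    · intro s hs
      simp only [Finset.mem_filter, Finset.mem_powerset] at hs ⊢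
      obtain ⟨hsub, hnc⟩ := hs
      have hk1 : k+1 ∉ s := fun h => by have := hsub h; simp [Finset.mem_Icc] at this
      have hk2 : k+2 ∉ s := fun h => by have := hsub h; simp [Finset.mem_Icc] at this
      refine ⟨⟨?_, ?_⟩, by simp⟩
      · intro i hi
        simp only [Finset.mem_insert] at hi
        rcases hi with rfl | hi
        · simp [Finset.mem_Icc]
        · have := hsub hi; simp only [Finset.mem_Icc] at this ⊢; omega
      · intro n hn
        simp only [Finset.mem_Icc] at hn
        simp only [Finset.mem_insert]
        rintro ⟨h1, h2⟩
        rcases h2 with h2 | h2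
        · -- n = k+2, so n-1 = k+1 ∈ insert: k+1 ≠ k+2 and k+1 ∉ s
          subst h2
          rcases h1 with h1 | h1
          · omega
          · simp at h1; exact hk1 h1
        · have hnk : n ≤ k := by
            by_contra hc
            push_neg at hc
            have hcases : n = k+1 ∨ n = k+2 := by omega
            rcases hcases with rfl | rfl
            · exact hk1 h2
            · exact hk2 h2
          have hn1 : n - 1 ∈ s := by
            rcases h1 with h1 | h1
            · omega
            · exact h1
          exact hnc n (by simp [Finset.mem_Icc]; omega) ⟨hn1, h2⟩
    · intro s hs
      simp only [Finset.mem_filter] at hs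
      exact Finset.insert_erase hs.2
    · intro s hs
      simp only [Finset.mem_filter, Finset.mem_powerset] at hs
      have hk2 : k+2 ∉ s := fun h => by have := hs.1 h; simp [Finset.mem_Icc] at this
      exact Finset.erase_insert hk2
    · intro s hs
      simp only [Finset.mem_filter, Finset.mem_powerset] at hs
      obtain ⟨⟨hsub, hnc⟩, hmem⟩ := hs
      have hk1 : k+1 ∉ s := by
        have := hnc (k+2) (by simp [Finset.mem_Icc])
        simp at this
        exact fun h => this h hmem
      rw [Finset.prod_Icc_succ_top (by omega : 1 ≤ k+2),
          Finset.prod_Icc_succ_top (by omega : 1 ≤ k+1)]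
      rw [if_pos hmem, if_neg hk1]
      have : ∏ i ∈ Finset.Icc 1 k, (if i ∈ s then p else 1 - p)
          = ∏ i ∈ Finset.Icc 1 k, (if i ∈ s.erase (k+2) then p else 1 - p) := by
        refine Finset.prod_congr rfl ?_
        intro i hi
        simp only [Finset.mem_Icc] at hi
        have : i ≠ k+2 := by omega
        simp [Finset.mem_erase, this]
      rw [this]; ring
  have hA : ∑ s ∈ (((Finset.Icc 1 (k+2)).powerset.filter
        (fun s => ∀ n ∈ Finset.Icc 2 (k+2), ¬(n - 1 ∈ s ∧ n ∈ s))).filter (fun s => ¬ k+2 ∈ s)),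
        ∏ i ∈ Finset.Icc 1 (k+2), (if i ∈ s then p else 1 - p)
      = (1-p) * Wt p (k+1) := by
    rw [Wt, Finset.mul_sum]
    refine Finset.sum_bij' (fun s _ => s) (fun s _ => s) ?_ ?_ ?_ ?_ ?_
    · intro s hs
      simp only [Finset.mem_filter, Finset.mem_powerset] at hs ⊢
      obtain ⟨⟨hsub, hnc⟩, hmem⟩ := hs
      constructor
      · intro i hi
        have h1 := hsub hi
        simp only [Finset.mem_Icc] at h1 ⊢
        have h2 : i ≠ k+2 := fun h => hmem (h ▸ hi)
        omega
      · intro n hn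
        simp only [Finset.mem_Icc] at hn
        exact hnc n (by simp [Finset.mem_Icc]; omega)
    · intro s hs
      simp only [Finset.mem_filter, Finset.mem_powerset] at hs ⊢
      obtain ⟨hsub, hnc⟩ := hs
      have hk2 : k+2 ∉ s := fun h => by have := hsub h; simp [Finset.mem_Icc] at this
      refine ⟨⟨fun i hi => ?_, fun n hn => ?_⟩, hk2⟩
      · have := hsub hi; simp only [Finset.mem_Icc] at this ⊢; omega
      · simp only [Finset.mem_Icc] at hn
        rcases Nat.lt_or_ge n (k+2) with h | h
        · exact hnc n (by simp [Finset.mem_Icc]; omega)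
        · have hnk : n = k+2 := by omega
          subst hnk
          rintro ⟨_, h2⟩; exact hk2 h2
    · intro s hs; rfl
    · intro s hs; rfl
    · intro s hs
      simp only [Finset.mem_filter, Finset.mem_powerset] at hs
      have hmem := hs.2
      rw [Finset.prod_Icc_succ_top (by omega : 1 ≤ k+2), if_neg hmem]
      ring
  rw [hB, hA]
  ring

lemma Ev_sum (p : ℝ) (k : ℕ) :
    ∑ s ∈ (Finset.Icc 1 (k+3)).powerset.filter
        (fun s => k+3 ∈ s ∧ k+2 ∈ s ∧ ∀ n ∈ Finset.Icc 2 (k+2), ¬(n - 1 ∈ s ∧ n ∈ s)),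
      ∏ i ∈ Finset.Icc 1 (k+3), (if i ∈ s then p else 1 - p)
    = p * p * ((1-p) * Wt p k) := by
  rw [Wt, Finset.mul_sum, Finset.mul_sum]
  refine Finset.sum_bij' (fun s _ => (s.erase (k+3)).erase (k+2))
    (fun s _ => insert (k+3) (insert (k+2) s)) ?_ ?_ ?_ ?_ ?_
  · intro s hs
    simp only [Finset.mem_filter, Finset.mem_powerset] at hs ⊢
    obtain ⟨hsub, h3, h2, hnc⟩ := hs
    have hk1 : k+1 ∉ s := by
      have := hnc (k+2) (by simp [Finset.mem_Icc])
      simp at this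
      exact fun h => this h h2
    constructor
    · intro i hi
      simp only [Finset.mem_erase] at hi
      obtain ⟨hne2, hne3, his⟩ := hi
      have h1 := hsub his
      simp only [Finset.mem_Icc] at h1 ⊢
      have : i ≠ k+1 := fun h => hk1 (h ▸ his)
      omega
    · intro n hn
      simp only [Finset.mem_Icc] at hn
      have := hnc n (by simp [Finset.mem_Icc]; omega)
      simp only [Finset.mem_erase]
      tauto
  · intro s hs
    simp only [Finset.mem_filter, Finset.mem_powerset] at hs ⊢
    obtain ⟨hsub, hnc⟩ := hs
    have hk1 : k+1 ∉ s := fun h => by have := hsub h; simp [Finset.mem_Icc] at this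
    have hk2 : k+2 ∉ s := fun h => by have := hsub h; simp [Finset.mem_Icc] at this
    have hk3 : k+3 ∉ s := fun h => by have := hsub h; simp [Finset.mem_Icc] at this
    refine ⟨?_, by simp, by simp, ?_⟩
    · intro i hi
      simp only [Finset.mem_insert] at hi
      rcases hi with rfl | rfl | hi
      · simp [Finset.mem_Icc]
      · simp [Finset.mem_Icc]
      · have := hsub hi; simp only [Finset.mem_Icc] at this ⊢; omega
    · intro n hn
      simp only [Finset.mem_Icc] at hn
      simp only [Finset.mem_insert]
      rintro ⟨h1, h2⟩
      have hnk : n ≤ k ∨ n = k+1 ∨ n = k+2 := by omega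
      rcases hnk with hnk | rfl | rfl
      · have hn1 : n - 1 ∈ s := by rcases h1 with h1 | h1 | h1 <;> first | omega | exact h1
        have hn2 : n ∈ s := by rcases h2 with h2 | h2 | h2 <;> first | omega | exact h2
        exact hnc n (by simp [Finset.mem_Icc]; omega) ⟨hn1, hn2⟩
      · rcases h2 with h2 | h2 | h2
        · omega
        · omega
        · exact hk1 h2
      · rcases h1 with h1 | h1 | h1
        · omega
        · omega
        · exact hk1 h1
  · intro s hs
    simp only [Finset.mem_filter] at hs
    obtain ⟨_, h3, h2, _⟩ := hs
    have h2' : k+2 ∈ s.erase (k+3) := by simp [Finset.mem_erase]; exact h2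
    show insert (k+3) (insert (k+2) ((s.erase (k+3)).erase (k+2))) = s
    rw [Finset.insert_erase h2', Finset.insert_erase h3]
  · intro s hs
    simp only [Finset.mem_filter, Finset.mem_powerset] at hs
    obtain ⟨hsub, _⟩ := hs
    have hk2 : k+2 ∉ s := fun h => by have := hsub h; simp [Finset.mem_Icc] at this
    have hk3 : k+3 ∉ insert (k+2) s := by
      simp only [Finset.mem_insert]
      rintro (h | h)
      · omega
      · have := hsub h; simp [Finset.mem_Icc] at this
    show ((insert (k+3) (insert (k+2) s)).erase (k+3)).erase (k+2) = s
    rw [Finset.erase_insert hk3, Finset.erase_insert hk2]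
  · intro s hs
    simp only [Finset.mem_filter, Finset.mem_powerset] at hs
    obtain ⟨hsub, h3, h2, hnc⟩ := hs
    have hk1 : k+1 ∉ s := by
      have := hnc (k+2) (by simp [Finset.mem_Icc])
      simp at this
      exact fun h => this h h2
    rw [Finset.prod_Icc_succ_top (by omega : 1 ≤ k+3),
        Finset.prod_Icc_succ_top (by omega : 1 ≤ k+2),
        Finset.prod_Icc_succ_top (by omega : 1 ≤ k+1)]
    rw [if_pos h3, if_pos h2, if_neg hk1]
    have : ∏ i ∈ Finset.Icc 1 k, (if i ∈ s then p else 1 - p)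
        = ∏ i ∈ Finset.Icc 1 k, (if i ∈ (s.erase (k+3)).erase (k+2) then p else 1 - p) := by
      refine Finset.prod_congr rfl ?_
      intro i hi
      simp only [Finset.mem_Icc] at hi
      have h1 : i ≠ k+2 := by omega
      have h2 : i ≠ k+3 := by omega
      simp [Finset.mem_erase, h1, h2]
    rw [this]; ring

lemma wt2_eq (ω : ℕ → Bool) (v : ℕ) (hv : 2 ≤ v) :
    waitingTime 2 ω = v ↔
      (ω (v-1) = true ∧ ω v = true ∧ ∀ n, 2 ≤ n → n < v → ¬(ω (n-1) = true ∧ ω n = true)) := by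
  have memS : ∀ n, (n ∈ {n | 2 ≤ n ∧ ∀ i ∈ Finset.Icc (n - 2 + 1) n, ω i = true}
      ↔ 2 ≤ n ∧ ω (n-1) = true ∧ ω n = true) := by
    intro n
    simp only [Set.mem_setOf_eq]
    constructor
    · rintro ⟨h2, hall⟩
      exact ⟨h2, hall _ (by simp [Finset.mem_Icc]; omega), hall _ (by simp [Finset.mem_Icc]; omega)⟩
    · rintro ⟨h2, ha, hb⟩
      refine ⟨h2, fun i hi => ?_⟩
      simp only [Finset.mem_Icc] at hi
      have : i = n - 1 ∨ i = n := by omega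
      rcases this with rfl | rfl
      · exact ha
      · exact hb
  unfold waitingTime
  constructor
  · intro hw
    have hne : {n | 2 ≤ n ∧ ∀ i ∈ Finset.Icc (n - 2 + 1) n, ω i = true}.Nonempty := by
      by_contra hc
      rw [Set.not_nonempty_iff_eq_empty] at hc
      rw [hc, Nat.sInf_empty] at hw
      omega
    have hv' := Nat.sInf_mem hne
    rw [hw, memS] at hv'
    refine ⟨hv'.2.1, hv'.2.2, ?_⟩
    intro n h2n hnv hcon
    have hmem := (memS n).2 ⟨h2n, hcon.1, hcon.2⟩
    have := Nat.sInf_le hmem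
    omega
  · rintro ⟨ha, hb, hmin⟩
    have hvS := (memS v).2 ⟨hv, ha, hb⟩
    have h1 := Nat.sInf_le hvS
    have h2 := Nat.sInf_mem ⟨v, hvS⟩
    rw [memS] at h2
    by_contra hne
    have hlt : sInf {n | 2 ≤ n ∧ ∀ i ∈ Finset.Icc (n - 2 + 1) n, ω i = true} < v :=
      lt_of_le_of_ne h1 hne
    exact hmin _ h2.1 hlt ⟨h2.2.1, h2.2.2⟩

lemma hW (p : ℝ) (h : ℕ → ℝ) (h1 : h 1 = 1) (h2 : h 2 = 1 - p)
    (hrec : ∀ v : ℕ, 3 ≤ v → h v = (1 - p) * h (v - 1) + p * (1 - p) * h (v - 2)) :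
    ∀ m : ℕ, h (m+2) = (1-p) * Wt p m := by
  intro m
  induction m using Nat.strong_induction_on with
  | _ m ih =>
    match m with
    | 0 => rw [Wt_zero]; rw [h2]; ring
    | 1 =>
      have hr := hrec 3 (by norm_num)
      rw [Wt_one]
      norm_num at hr
      rw [hr, h1, h2]; ring
    | (n+2) =>
      have hr := hrec (n+4) (by omega)
      have e1 : n+4-1 = n+3 := rfl
      have e2 : n+4-2 = n+2 := rfl
      rw [e1, e2] at hr
      have g1 : h (n+3) = (1-p) * Wt p (n+1) := ih (n+1) (by omega)
      have g2 : h (n+2) = (1-p) * Wt p n := ih n (by omega)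
      show h (n+4) = (1-p) * Wt p (n+2)
      rw [hr, g1, g2, Wt_rec]
      ring

theorem stmt0 (p : ℝ) (hp0 : 0 < p) (hp1 : p < 1)
    (μ : Measure (ℕ → Bool)) [IsProbabilityMeasure μ]
    -- μ is the infinite product of Bernoulli(p) measures: the finite-dimensional
    -- cylinder probabilities are products of the marginals.
    (hμ : ∀ (n : ℕ) (b : ℕ → Bool),
      μ {ω | ∀ i, 1 ≤ i → i ≤ n → ω i = b i}
        = ENNReal.ofReal (∏ i ∈ Finset.Icc 1 n, if b i = true then p else 1 - p))
    (h : ℕ → ℝ) (h1 : h 1 = 1) (h2 : h 2 = 1 - p)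
    (hrec : ∀ v : ℕ, 3 ≤ v → h v = (1 - p) * h (v - 1) + p * (1 - p) * h (v - 2)) :
    ∀ v : ℕ, 2 ≤ v →
      (μ {ω | waitingTime 2 ω = v}).toReal = h (v - 1) * p ^ 2 := by
  intro v hv
  have hEeq : {ω : ℕ → Bool | waitingTime 2 ω = v}
      = ⋃ s ∈ (Finset.Icc 1 v).powerset.filter
          (fun s => v ∈ s ∧ v-1 ∈ s ∧ ∀ n ∈ Finset.Icc 2 (v-1), ¬(n - 1 ∈ s ∧ n ∈ s)),
        {ω : ℕ → Bool | ∀ i, 1 ≤ i → i ≤ v → ω i = decide (i ∈ s)} := by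
    ext ω
    simp only [Set.mem_setOf_eq, Set.mem_iUnion, exists_prop]
    rw [wt2_eq ω v hv]
    constructor
    · rintro ⟨ha, hb, hmin⟩
      refine ⟨(Finset.Icc 1 v).filter (fun i => ω i = true), ?_, ?_⟩
      · simp only [Finset.mem_filter, Finset.mem_powerset]
        refine ⟨Finset.filter_subset _ _, ?_, ?_, ?_⟩
        · simp only [Finset.mem_filter, Finset.mem_Icc]; exact ⟨⟨by omega, le_rfl⟩, hb⟩
        · simp only [Finset.mem_filter, Finset.mem_Icc]; exact ⟨⟨by omega, by omega⟩, ha⟩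
        · intro n hn
          simp only [Finset.mem_Icc] at hn
          simp only [Finset.mem_filter, Finset.mem_Icc]
          rintro ⟨⟨-, hω1⟩, ⟨-, hω2⟩⟩
          exact hmin n (by omega) (by omega) ⟨hω1, hω2⟩
      · intro i h1i hiv
        by_cases hωi : ω i = true
        · simp [Finset.mem_filter, Finset.mem_Icc, h1i, hiv, hωi]
        · have hf : ω i = false := by
            cases hωi' : ω i
            · rfl
            · exact absurd hωi' hωi
          simp [Finset.mem_filter, Finset.mem_Icc, hf]
    · rintro ⟨s, hsF, hω⟩
      simp only [Finset.mem_filter, Finset.mem_powerset] at hsF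
      obtain ⟨hsub, hvs, hv1s, hnc⟩ := hsF
      have key : ∀ i, 1 ≤ i → i ≤ v → (ω i = true ↔ i ∈ s) := by
        intro i hi1 hi2
        rw [hω i hi1 hi2]
        simp
      refine ⟨(key (v-1) (by omega) (by omega)).2 hv1s, (key v (by omega) le_rfl).2 hvs, ?_⟩
      intro n h2n hnv hcon
      have hn1 : n - 1 ∈ s := (key (n-1) (by omega) (by omega)).1 hcon.1
      have hn2 : n ∈ s := (key n (by omega) (by omega)).1 hcon.2
      exact hnc n (by simp [Finset.mem_Icc]; omega) ⟨hn1, hn2⟩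
  have hmeas : ∀ s : Finset ℕ,
      MeasurableSet {ω : ℕ → Bool | ∀ i, 1 ≤ i → i ≤ v → ω i = decide (i ∈ s)} := by
    intro s
    have heq : {ω : ℕ → Bool | ∀ i, 1 ≤ i → i ≤ v → ω i = decide (i ∈ s)}
        = ⋂ i ∈ Set.Icc 1 v, {ω : ℕ → Bool | ω i = decide (i ∈ s)} := by
      ext ω
      simp only [Set.mem_setOf_eq, Set.mem_iInter, Set.mem_Icc]
      constructor
      · intro H i hi; exact H i hi.1 hi.2
      · intro H i hi1 hi2; exact H i ⟨hi1, hi2⟩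
    rw [heq]
    refine MeasurableSet.biInter (Set.to_countable _) ?_
    intro i _
    have hm : Measurable (fun ω : ℕ → Bool => ω i) := measurable_pi_apply i
    exact hm (measurableSet_singleton (decide (i ∈ s)))
  have hdisj : (((Finset.Icc 1 v).powerset.filter
        (fun s => v ∈ s ∧ v-1 ∈ s ∧ ∀ n ∈ Finset.Icc 2 (v-1), ¬(n - 1 ∈ s ∧ n ∈ s)) :
          Finset (Finset ℕ)) : Set (Finset ℕ)).PairwiseDisjoint
      (fun s => {ω : ℕ → Bool | ∀ i, 1 ≤ i → i ≤ v → ω i = decide (i ∈ s)}) := by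
    intro s hs t ht hst
    simp only [Finset.coe_filter, Set.mem_setOf_eq, Finset.mem_powerset] at hs ht
    rw [Function.onFun, Set.disjoint_left]
    intro ω hωs hωt
    apply hst
    ext a
    constructor
    · intro has
      have ha := hs.1 has
      simp only [Finset.mem_Icc] at ha
      have e1 := hωs a ha.1 ha.2
      have e2 := hωt a ha.1 ha.2
      have : decide (a ∈ s) = decide (a ∈ t) := by rw [← e1, ← e2]
      exact (decide_eq_decide.mp this).mp has
    · intro hat
      have ha := ht.1 hat
      simp only [Finset.mem_Icc] at ha
      have e1 := hωs a ha.1 ha.2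
      have e2 := hωt a ha.1 ha.2
      have : decide (a ∈ s) = decide (a ∈ t) := by rw [← e1, ← e2]
      exact (decide_eq_decide.mp this).mpr hat
  rw [hEeq, measure_biUnion_finset hdisj (fun s _ => hmeas s)]
  have hterm : ∀ s ∈ (Finset.Icc 1 v).powerset.filter
      (fun s => v ∈ s ∧ v-1 ∈ s ∧ ∀ n ∈ Finset.Icc 2 (v-1), ¬(n - 1 ∈ s ∧ n ∈ s)),
      μ {ω : ℕ → Bool | ∀ i, 1 ≤ i → i ≤ v → ω i = decide (i ∈ s)}
      = ENNReal.ofReal (∏ i ∈ Finset.Icc 1 v, if i ∈ s then p else 1 - p) := by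
    intro s _
    rw [hμ v (fun i => decide (i ∈ s))]
    congr 1
    refine Finset.prod_congr rfl fun i _ => ?_
    simp
  rw [Finset.sum_congr rfl hterm]
  have hnn : ∀ s ∈ (Finset.Icc 1 v).powerset.filter
      (fun s => v ∈ s ∧ v-1 ∈ s ∧ ∀ n ∈ Finset.Icc 2 (v-1), ¬(n - 1 ∈ s ∧ n ∈ s)),
      0 ≤ ∏ i ∈ Finset.Icc 1 v, if i ∈ s then p else 1 - p := by
    intro s _
    apply Finset.prod_nonneg
    intro i _
    split
    · linarith
    · linarith
  rw [← ENNReal.ofReal_sum_of_nonneg hnn, ENNReal.toReal_ofReal (Finset.sum_nonneg hnn)]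
  -- now pure real computation
  rcases eq_or_lt_of_le hv with hv2 | hv3
  · -- v = 2
    subst hv2
    have hFeq : ((Finset.Icc 1 2).powerset.filter
        (fun s => 2 ∈ s ∧ 2-1 ∈ s ∧ ∀ n ∈ Finset.Icc 2 (2-1), ¬(n - 1 ∈ s ∧ n ∈ s)))
        = {({1,2} : Finset ℕ)} := by
      ext s
      simp only [Finset.mem_filter, Finset.mem_powerset, Finset.mem_singleton]
      constructor
      · rintro ⟨hsub, h2s, h1s, -⟩
        apply Finset.Subset.antisymm
        · intro a ha
          have := hsub ha
          simp only [Finset.mem_Icc] at this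
          simp only [Finset.mem_insert, Finset.mem_singleton]
          omega
        · intro a ha
          simp only [Finset.mem_insert, Finset.mem_singleton] at ha
          rcases ha with rfl | rfl
          · exact h1s
          · exact h2s
      · rintro rfl
        exact ⟨by decide, by decide, by decide, by decide⟩
    rw [hFeq, Finset.sum_singleton]
    have hIcc : Finset.Icc 1 2 = ({1,2} : Finset ℕ) := by decide
    rw [hIcc, Finset.prod_pair (by decide : (1:ℕ) ≠ 2)]
    have m1 : (1:ℕ) ∈ ({1,2} : Finset ℕ) := by decide
    have m2 : (2:ℕ) ∈ ({1,2} : Finset ℕ) := by decide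
    rw [if_pos m1, if_pos m2, show (2:ℕ)-1 = 1 from rfl, h1]
    ring
  · -- v ≥ 3
    obtain ⟨k, rfl⟩ : ∃ k, v = k + 3 := ⟨v - 3, by omega⟩
    have e1 : k+3-1 = k+2 := rfl
    rw [e1]
    rw [Ev_sum p k]
    rw [← hW p h h1 h2 hrec k]
    ring
end

section
/- Fix an integer k ≥ 1. For every integer v ≥ 1, P(V(k) = v) = h_{v-k+1}·p^k, where the sequence (h_v)_{v∈ℤ} is defined by h_v = 0 for v ≤ 0, h_1 = 1, and h_v = q·∑_{i=1}^{k} p^{i-1}·h_{v-i} for v ≥ 2. -/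
/-!
Condition on the first failure. If `V(k) = v > k`, one of the trials `1, …, k` fails; when the
first failure is trial `i + 1` (so `i < k`), no run can have been completed before it or can
contain it, hence `V(k) = i + 1 + V'(k)`, where `V'` is the waiting time of the sequence restarted
after trial `i + 1`. The prefix "`i` successes, then a failure" has probability `p ^ i * q` and is
independent of the restarted sequence, so
`P(V = v) = ∑_{i < k} p ^ i * q * P(V = v - i - 1)`,
which is the recursion of `h_{v-k+1} * p ^ k`; the cases `v < k` and `v = k` give its initial
values. Independence is used only for events depending on finitely many trials, whose
probabilities are finite sums over cylinders.
-/

open MeasureTheory Finset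

namespace SuccessRun

lemma _root_.DependsOn.mem_iff {ι α : Type*} {E : Set (ι → α)} {s : Set ι}
    (hE : DependsOn (· ∈ E) s) {ω ω' : ι → α} (h : ∀ i ∈ s, ω i = ω' i) : ω ∈ E ↔ ω' ∈ E :=
  Iff.of_eq (hE h)

def trialWeight (p : ℝ) (b : Bool) : ℝ := if b then p else 1 - p

lemma trialWeight_nonneg {p : ℝ} (hp0 : 0 ≤ p) (hp1 : p ≤ 1) (b : Bool) :
    0 ≤ trialWeight p b := by
  cases b <;> simp [trialWeight, hp0, hp1]

/-- Trials `1, 2, …` are independent Bernoulli(`p`) under `μ`; coordinate `0` is unconstrained. -/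
def IsBernoulliTrials (p : ℝ) (μ : Measure (ℕ → Bool)) : Prop :=
  ∀ (n : ℕ) (b : ℕ → Bool), μ {ω | ∀ i, 1 ≤ i → i ≤ n → ω i = b i}
    = ENNReal.ofReal (∏ i ∈ Icc 1 n, trialWeight p (b i))

/-- Entry `j` of the pattern `b` prescribes trial `j + 1`. -/
def prefixCylinder (m : ℕ) (b : Fin m → Bool) : Set (ℕ → Bool) :=
  {ω | ∀ j : Fin m, ω (j + 1) = b j}

def ofPrefix {m : ℕ} (b : Fin m → Bool) (i : ℕ) : Bool :=
  if h : i - 1 < m then b ⟨i - 1, h⟩ else false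

lemma ofPrefix_add_one {m : ℕ} (b : Fin m → Bool) {i : ℕ} (hi : i < m) :
    ofPrefix b (i + 1) = b ⟨i, hi⟩ := by
  simp [ofPrefix, hi]

lemma ofPrefix_cons_add_one {m : ℕ} (c : Bool) (b : Fin m → Bool) {n : ℕ} (hn : 1 ≤ n) :
    ofPrefix (Fin.cons c b : Fin (m + 1) → Bool) (n + 1) = ofPrefix b n := by
  obtain ⟨n, rfl⟩ : ∃ n', n = n' + 1 := ⟨n - 1, by omega⟩
  by_cases h : n < m
  · rw [ofPrefix_add_one _ (by omega), ofPrefix_add_one _ h]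
    exact Fin.cons_succ (α := fun _ => Bool) c b ⟨n, h⟩
  · simp [ofPrefix, h]

lemma mem_prefixCylinder_iff {m : ℕ} {b : Fin m → Bool} {ω : ℕ → Bool} :
    ω ∈ prefixCylinder m b ↔ ∀ i ∈ Set.Icc 1 m, ω i = ofPrefix b i := by
  refine ⟨fun h i hi => ?_, fun h j => ?_⟩
  · obtain ⟨i, rfl⟩ : ∃ i', i = i' + 1 := ⟨i - 1, by grind⟩
    rw [ofPrefix_add_one b (by grind)]
    exact h ⟨i, _⟩
  · rw [h (j + 1) ⟨by omega, j.isLt⟩, ofPrefix_add_one b j.isLt]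

lemma measurableSet_prefixCylinder (m : ℕ) (b : Fin m → Bool) :
    MeasurableSet (prefixCylinder m b) := by
  simp only [prefixCylinder, Set.ofPred_forall]
  exact MeasurableSet.iInter fun j => measurableSet_eq_fun (measurable_pi_apply _) measurable_const

lemma pairwise_disjoint_prefixCylinder (m : ℕ) :
    Pairwise fun b b' => Disjoint (prefixCylinder m b) (prefixCylinder m b') := by
  intro b b' hbb'
  refine Set.disjoint_left.2 fun ω hb hb' => hbb' (funext fun j => ?_)
  rw [← hb j, hb' j]

lemma iUnion_prefixCylinder (m : ℕ) : ⋃ b, prefixCylinder m b = Set.univ :=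
  Set.eq_univ_of_forall fun ω => Set.mem_iUnion.2 ⟨fun j => ω (j + 1), fun _ => rfl⟩

lemma measure_prefixCylinder {p : ℝ} {μ : Measure (ℕ → Bool)} (hμ : IsBernoulliTrials p μ)
    {m : ℕ} (b : Fin m → Bool) :
    μ (prefixCylinder m b) = ENNReal.ofReal (∏ j, trialWeight p (b j)) := by
  have hset : prefixCylinder m b = {ω | ∀ i, 1 ≤ i → i ≤ m → ω i = ofPrefix b i} := by
    ext ω
    simp [mem_prefixCylinder_iff]
  rw [hset, hμ, ← Ico_add_one_right_eq_Icc, prod_Ico_eq_prod_range, Nat.add_sub_cancel,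
    ← Fin.prod_univ_eq_prod_range]
  simp_rw [add_comm 1, ofPrefix_add_one b (Fin.isLt _)]

open Classical in
lemma inter_prefixCylinder_of_dependsOn {E : Set (ℕ → Bool)} {m : ℕ}
    (hE : DependsOn (· ∈ E) (Set.Icc 1 m)) (b : Fin m → Bool) :
    E ∩ prefixCylinder m b = if ofPrefix b ∈ E then prefixCylinder m b else ∅ := by
  ext ω
  have hω : ω ∈ prefixCylinder m b → (ω ∈ E ↔ ofPrefix b ∈ E) := fun h =>
    hE.mem_iff (mem_prefixCylinder_iff.1 h)
  split_ifs with hb <;> simp only [Set.mem_inter_iff, Set.mem_empty_iff_false] <;> grind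

lemma measurableSet_of_dependsOn {E : Set (ℕ → Bool)} {m : ℕ}
    (hE : DependsOn (· ∈ E) (Set.Icc 1 m)) : MeasurableSet E := by
  rw [← Set.inter_univ E, ← iUnion_prefixCylinder m, Set.inter_iUnion]
  refine MeasurableSet.iUnion fun b => ?_
  rw [inter_prefixCylinder_of_dependsOn hE]
  split_ifs
  exacts [measurableSet_prefixCylinder m b, MeasurableSet.empty]

open Classical in
lemma measure_eq_sum_of_dependsOn {p : ℝ} {μ : Measure (ℕ → Bool)} (hμ : IsBernoulliTrials p μ)
    {E : Set (ℕ → Bool)} {m : ℕ} (hE : DependsOn (· ∈ E) (Set.Icc 1 m)) :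
    μ E = ∑ b : Fin m → Bool,
      if ofPrefix b ∈ E then ENNReal.ofReal (∏ j, trialWeight p (b j)) else 0 := by
  calc μ E = μ (⋃ b, E ∩ prefixCylinder m b) := by
        rw [← Set.inter_iUnion, iUnion_prefixCylinder, Set.inter_univ]
    _ = ∑ b, μ (E ∩ prefixCylinder m b) := by
        rw [measure_iUnion _ fun b => (measurableSet_of_dependsOn hE).inter
          (measurableSet_prefixCylinder m b), tsum_fintype]
        exact fun b b' hbb' => (pairwise_disjoint_prefixCylinder m hbb').mono
          Set.inter_subset_right Set.inter_subset_right
    _ = _ := sum_congr rfl fun b _ => by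
        rw [inter_prefixCylinder_of_dependsOn hE]
        split_ifs <;> simp [measure_prefixCylinder hμ]

def consTrial (c : Bool) (E : Set (ℕ → Bool)) : Set (ℕ → Bool) :=
  {ω | ω 1 = c ∧ (fun n => ω (n + 1)) ∈ E}

lemma dependsOn_consTrial {E : Set (ℕ → Bool)} {m : ℕ} (hE : DependsOn (· ∈ E) (Set.Icc 1 m))
    (c : Bool) : DependsOn (· ∈ consTrial c E) (Set.Icc 1 (m + 1)) := by
  intro ω ω' h
  simp only [consTrial, Set.mem_ofPred_eq]
  rw [h 1 ⟨le_rfl, by omega⟩, hE.mem_iff fun i hi => h (i + 1) ⟨by omega, by grind⟩]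

lemma ofPrefix_cons_mem_consTrial {E : Set (ℕ → Bool)} {m : ℕ}
    (hE : DependsOn (· ∈ E) (Set.Icc 1 m)) (c c' : Bool) (b : Fin m → Bool) :
    ofPrefix (Fin.cons c' b : Fin (m + 1) → Bool) ∈ consTrial c E ↔ c' = c ∧ ofPrefix b ∈ E := by
  have hfirst : ofPrefix (Fin.cons c' b : Fin (m + 1) → Bool) 1 = c' :=
    ofPrefix_add_one (Fin.cons c' b : Fin (m + 1) → Bool) (Nat.succ_pos m)
  simp only [consTrial, Set.mem_ofPred_eq, hfirst]
  rw [hE.mem_iff fun i hi => ofPrefix_cons_add_one c' b hi.1]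

lemma measure_consTrial {p : ℝ} (hp0 : 0 ≤ p) (hp1 : p ≤ 1) {μ : Measure (ℕ → Bool)}
    (hμ : IsBernoulliTrials p μ) {E : Set (ℕ → Bool)} {m : ℕ}
    (hE : DependsOn (· ∈ E) (Set.Icc 1 m)) (c : Bool) :
    μ (consTrial c E) = ENNReal.ofReal (trialWeight p c) * μ E := by
  classical
  have hcons (F : (Fin (m + 1) → Bool) → ENNReal) :
      ∑ b, F b = ∑ c', ∑ b : Fin m → Bool, F (Fin.cons c' b) := by
    rw [← Fintype.sum_prod_type']
    exact (Fintype.sum_equiv (Fin.consEquiv fun _ => Bool) _ _ fun _ => rfl).symm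
  rw [measure_eq_sum_of_dependsOn hμ (dependsOn_consTrial hE c),
    measure_eq_sum_of_dependsOn hμ hE, mul_sum, hcons, Fintype.sum_bool]
  simp only [ofPrefix_cons_mem_consTrial hE, Fin.prod_univ_succ, Fin.cons_zero, Fin.cons_succ,
    ENNReal.ofReal_mul (trialWeight_nonneg hp0 hp1 _)]
  cases c <;> simp [mul_ite]

def failsAfterRun (i : ℕ) (E : Set (ℕ → Bool)) : Set (ℕ → Bool) :=
  {ω | (∀ j ∈ Icc 1 i, ω j = true) ∧ ω (i + 1) = false ∧ (fun n => ω (n + (i + 1))) ∈ E}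

lemma failsAfterRun_zero (E : Set (ℕ → Bool)) : failsAfterRun 0 E = consTrial false E := by
  ext ω
  simp [failsAfterRun, consTrial]

lemma failsAfterRun_succ (i : ℕ) (E : Set (ℕ → Bool)) :
    failsAfterRun (i + 1) E = consTrial true (failsAfterRun i E) := by
  ext ω
  have hrun : (∀ j ∈ Icc 1 (i + 1), ω j = true) ↔
      ω 1 = true ∧ ∀ j ∈ Icc 1 i, ω (j + 1) = true := by
    refine ⟨fun h => ⟨h 1 (by simp), fun j hj => h (j + 1) (by simp at hj ⊢; omega)⟩,
      fun ⟨h1, h⟩ j hj => ?_⟩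
    obtain rfl | hj1 := eq_or_ne j 1
    · exact h1
    · simpa [Nat.sub_add_cancel (by simp at hj; omega : 1 ≤ j)] using
        h (j - 1) (by simp at hj ⊢; omega)
  simp only [failsAfterRun, consTrial, Set.mem_ofPred_eq, hrun, add_assoc, add_comm 1]
  tauto

lemma pairwise_disjoint_failsAfterRun (E : ℕ → Set (ℕ → Bool)) :
    Pairwise fun i j => Disjoint (failsAfterRun i (E i)) (failsAfterRun j (E j)) := by
  intro i j hij
  wlog hlt : i < j generalizing i j
  · exact (this hij.symm (by omega)).symm
  refine Set.disjoint_left.2 fun ω ⟨_, hfail, _⟩ ⟨hrun, _⟩ => ?_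
  simp [hrun (i + 1) (by simp; omega)] at hfail

lemma dependsOn_failsAfterRun {E : Set (ℕ → Bool)} {m : ℕ}
    (hE : DependsOn (· ∈ E) (Set.Icc 1 m)) (i : ℕ) :
    DependsOn (· ∈ failsAfterRun i E) (Set.Icc 1 (m + i + 1)) := by
  induction i with
  | zero => simpa [failsAfterRun_zero] using dependsOn_consTrial hE false
  | succ i ih => simpa [failsAfterRun_succ, add_assoc] using dependsOn_consTrial ih true

lemma measure_failsAfterRun {p : ℝ} (hp0 : 0 ≤ p) (hp1 : p ≤ 1) {μ : Measure (ℕ → Bool)}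
    (hμ : IsBernoulliTrials p μ) {E : Set (ℕ → Bool)} {m : ℕ}
    (hE : DependsOn (· ∈ E) (Set.Icc 1 m)) (i : ℕ) :
    μ (failsAfterRun i E) = ENNReal.ofReal (p ^ i * (1 - p)) * μ E := by
  induction i with
  | zero => simp [failsAfterRun_zero, measure_consTrial hp0 hp1 hμ hE, trialWeight]
  | succ i ih =>
    rw [failsAfterRun_succ, measure_consTrial hp0 hp1 hμ (dependsOn_failsAfterRun hE i), ih,
      ← mul_assoc, ← ENNReal.ofReal_mul (trialWeight_nonneg hp0 hp1 _)]
    congr 2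
    simp only [trialWeight, if_true]
    ring

def RunEndsAt (k : ℕ) (ω : ℕ → Bool) (n : ℕ) : Prop :=
  k ≤ n ∧ ∀ i ∈ Icc (n - k + 1) n, ω i = true

lemma waitingTime_eq_iff {k v : ℕ} {ω : ℕ → Bool} (hv : v ≠ 0) :
    waitingTime k ω = v ↔ RunEndsAt k ω v ∧ ∀ n < v, ¬RunEndsAt k ω n := by
  change sInf {n | RunEndsAt k ω n} = v ↔ _
  constructor
  · rintro rfl
    exact ⟨Nat.sInf_mem (Nat.nonempty_of_pos_sInf (Nat.pos_of_ne_zero hv)),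
      fun n hn => Nat.notMem_of_lt_sInf hn⟩
  · rintro ⟨hrun, hmin⟩
    exact IsLeast.csInf_eq ⟨hrun, fun n hn => not_lt.1 fun h => hmin n h hn⟩

lemma dependsOn_runEndsAt (k n : ℕ) : DependsOn (RunEndsAt k · n) (Set.Icc 1 n) := by
  intro ω ω' h
  refine propext (and_congr_right fun hkn => forall₂_congr fun i hi => ?_)
  rw [h i (by simp at hi ⊢; omega)]

lemma dependsOn_waitingTime_eq (k : ℕ) {v : ℕ} (hv : v ≠ 0) :
    DependsOn (· ∈ {ω | waitingTime k ω = v}) (Set.Icc 1 v) := by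
  intro ω ω' h
  have hrun (n : ℕ) (hn : n ≤ v) : RunEndsAt k ω n = RunEndsAt k ω' n :=
    dependsOn_runEndsAt k n fun i hi => h i ⟨hi.1, hi.2.trans hn⟩
  simp only [Set.mem_ofPred_eq, waitingTime_eq_iff hv, hrun v le_rfl]
  exact propext (and_congr_right' (forall₂_congr fun n hn => by rw [hrun n hn.le]))

lemma runEndsAt_add_iff {k n : ℕ} (hkn : k ≤ n) (j : ℕ) (ω : ℕ → Bool) :
    RunEndsAt k ω (n + j) ↔ RunEndsAt k (fun t => ω (t + j)) n := by
  simp only [RunEndsAt, mem_Icc]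
  refine ⟨fun ⟨_, h⟩ => ⟨hkn, fun i hi => h _ (by omega)⟩, fun ⟨_, h⟩ => ⟨by omega, fun i hi => ?_⟩⟩
  simpa [Nat.sub_add_cancel (by omega : j ≤ i)] using h (i - j) (by omega)

/-- A failure at trial `j ≤ k` cannot lie in a completed run, so every run ends at least `k`
trials after it. -/
lemma runEndsAt_iff_of_fail {k j n : ℕ} {ω : ℕ → Bool} (hj : ω j = false) (hjk : j ≤ k) :
    RunEndsAt k ω n ↔ j ≤ n ∧ RunEndsAt k (fun t => ω (t + j)) (n - j) := by
  constructor
  · intro hrun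
    have hkn : k ≤ n - j := by
      by_contra hlt
      have := hrun.1
      have := hrun.2 j (by simp; omega)
      simp [hj] at this
    exact ⟨by omega, (runEndsAt_add_iff hkn j ω).1 (by rwa [Nat.sub_add_cancel (by omega)])⟩
  · rintro ⟨hjn, hrun⟩
    simpa [Nat.sub_add_cancel hjn] using (runEndsAt_add_iff hrun.1 j ω).2 hrun

lemma waitingTime_eq_add_iff_of_fail {k j v : ℕ} {ω : ℕ → Bool} (hj : ω j = false)
    (hjk : j ≤ k) (hv : v ≠ 0) :
    waitingTime k ω = v + j ↔ waitingTime k (fun t => ω (t + j)) = v := by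
  rw [waitingTime_eq_iff (by omega), waitingTime_eq_iff hv, runEndsAt_iff_of_fail hj hjk,
    Nat.add_sub_cancel]
  refine and_congr (and_iff_right (by omega)) ⟨fun h n hn hrun => ?_, fun h n hn hrun => ?_⟩
  · exact h (n + j) (by omega) ((runEndsAt_iff_of_fail hj hjk).2 (by simpa using hrun))
  · obtain ⟨hjn, hrun⟩ := (runEndsAt_iff_of_fail hj hjk).1 hrun
    exact h (n - j) (by omega) hrun

/-- Conditioning on the first failure, which occurs among trials `1, …, k` when `k < v`. -/
lemma waitingTime_eq_iff_exists_failsAfterRun {k v : ℕ} (hkv : k < v) (ω : ℕ → Bool) :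
    waitingTime k ω = v ↔ ∃ i < k, ω ∈ failsAfterRun i {ω | waitingTime k ω = v - (i + 1)} := by
  constructor
  · intro hω
    have hfail : ∃ i, ω (i + 1) = false ∧ i < k := by
      by_contra! hrun
      refine ((waitingTime_eq_iff (by omega)).1 hω).2 k hkv ⟨le_rfl, fun j hj => ?_⟩
      simp only [mem_Icc, Nat.sub_self, zero_add] at hj
      by_contra hj'
      have := hrun (j - 1) (by simpa [Nat.sub_add_cancel hj.1] using hj')
      omega
    obtain ⟨i, ⟨hi, hik⟩, hmin⟩ : ∃ i, (ω (i + 1) = false ∧ i < k) ∧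
        ∀ j < i, ¬(ω (j + 1) = false ∧ j < k) :=
      ⟨Nat.find hfail, Nat.find_spec hfail, fun j => Nat.find_min hfail⟩
    refine ⟨i, hik, fun j hj => ?_, hi, ?_⟩
    · simp only [mem_Icc] at hj
      by_contra hj'
      exact hmin (j - 1) (by omega) ⟨by simpa [Nat.sub_add_cancel hj.1] using hj', by omega⟩
    · refine (waitingTime_eq_add_iff_of_fail hi hik (by omega)).1 ?_
      rwa [Nat.sub_add_cancel (by omega)]
  · rintro ⟨i, hik, -, hfail, hshift⟩
    have := (waitingTime_eq_add_iff_of_fail hfail hik (by omega)).2 hshift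
    rwa [Nat.sub_add_cancel (by omega)] at this

lemma measure_waitingTime_eq_sum {p : ℝ} (hp0 : 0 ≤ p) (hp1 : p ≤ 1) {μ : Measure (ℕ → Bool)}
    (hμ : IsBernoulliTrials p μ) {k v : ℕ} (hkv : k < v) :
    μ {ω | waitingTime k ω = v}
      = ∑ i ∈ range k, ENNReal.ofReal (p ^ i * (1 - p)) * μ {ω | waitingTime k ω = v - (i + 1)} := by
  have hdep (i : ℕ) (hi : i ∈ range k) :
      DependsOn (· ∈ {ω | waitingTime k ω = v - (i + 1)}) (Set.Icc 1 (v - (i + 1))) :=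
    dependsOn_waitingTime_eq k (by simp at hi; omega)
  have hset : {ω | waitingTime k ω = v}
      = ⋃ i ∈ range k, failsAfterRun i {ω | waitingTime k ω = v - (i + 1)} := by
    ext ω
    simp [waitingTime_eq_iff_exists_failsAfterRun hkv]
  rw [hset, measure_biUnion_finset
    (fun i _ j _ hij =>
      pairwise_disjoint_failsAfterRun (fun i => {ω | waitingTime k ω = v - (i + 1)}) hij)
    fun i hi => measurableSet_of_dependsOn (dependsOn_failsAfterRun (hdep i hi) i)]
  exact sum_congr rfl fun i hi => measure_failsAfterRun hp0 hp1 hμ (hdep i hi) i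

lemma measure_waitingTime_eq_self {p : ℝ} {μ : Measure (ℕ → Bool)} (hμ : IsBernoulliTrials p μ)
    {k : ℕ} (hk : k ≠ 0) : μ {ω | waitingTime k ω = k} = ENNReal.ofReal (p ^ k) := by
  have hset : {ω | waitingTime k ω = k} = {ω | ∀ i, 1 ≤ i → i ≤ k → ω i = true} := by
    ext ω
    simp only [Set.mem_ofPred_eq, waitingTime_eq_iff hk, RunEndsAt, Nat.sub_self, zero_add, mem_Icc]
    refine ⟨fun ⟨⟨_, hrun⟩, _⟩ i hi1 hik => hrun i ⟨hi1, hik⟩,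
      fun hrun => ⟨⟨le_rfl, fun i hi => hrun i hi.1 hi.2⟩, fun n hn hrun' => ?_⟩⟩
    exact absurd hrun'.1 (by omega)
  rw [hset, hμ k fun _ => true]
  simp [trialWeight]

lemma waitingTime_ne_of_lt {k v : ℕ} (hv : v ≠ 0) (hvk : v < k) (ω : ℕ → Bool) :
    waitingTime k ω ≠ v := fun h => by
  have := ((waitingTime_eq_iff hv).1 h).1.1
  omega

end SuccessRun

open SuccessRun in
theorem stmt1_general (p : ℝ) (hp0 : 0 < p) (hp1 : p < 1) (k : ℕ)
    (μ : Measure (ℕ → Bool)) [IsProbabilityMeasure μ]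
    (hμ : ∀ (n : ℕ) (b : ℕ → Bool),
      μ {ω | ∀ i, 1 ≤ i → i ≤ n → ω i = b i}
        = ENNReal.ofReal (∏ i ∈ Finset.Icc 1 n, if b i = true then p else 1 - p))
    (h : ℤ → ℝ) (h0 : ∀ v : ℤ, v ≤ 0 → h v = 0) (h1 : h 1 = 1)
    (hrec : ∀ v : ℤ, 2 ≤ v →
      h v = (1 - p) * ∑ i ∈ Finset.Icc 1 k, p ^ (i - 1) * h (v - i)) :
    ∀ v : ℕ, 1 ≤ v →
      (μ {ω | waitingTime k ω = v}).toReal = h ((v : ℤ) - k + 1) * p ^ k := by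
  intro v
  induction v using Nat.strong_induction_on with
  | _ v ih =>
  intro hv
  rcases lt_trichotomy v k with hvk | rfl | hkv
  · rw [h0 _ (by omega), zero_mul, Set.eq_empty_of_forall_notMem (s := {ω | waitingTime k ω = v})
      fun ω => waitingTime_ne_of_lt (by omega) hvk ω, measure_empty, ENNReal.toReal_zero]
  · rw [measure_waitingTime_eq_self hμ (by omega), ENNReal.toReal_ofReal (by positivity),
      sub_self, zero_add, h1, one_mul]
  · rw [measure_waitingTime_eq_sum hp0.le hp1.le hμ hkv,
      ENNReal.toReal_sum fun _ _ => ENNReal.mul_ne_top ENNReal.ofReal_ne_top (measure_ne_top μ _),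
      hrec _ (by omega), ← Ico_add_one_right_eq_Icc, sum_Ico_eq_sum_range, Nat.add_sub_cancel,
      mul_sum, sum_mul]
    refine sum_congr rfl fun i hi => ?_
    rw [mem_range] at hi
    have harg : ((v - (i + 1) : ℕ) : ℤ) - k + 1 = (v : ℤ) - k + 1 - ((1 + i : ℕ) : ℤ) := by
      omega
    rw [ENNReal.toReal_mul, ENNReal.toReal_ofReal (mul_nonneg (pow_nonneg hp0.le i) (by linarith)),
      ih _ (by omega) (by omega), harg, Nat.add_sub_cancel_left]
    ring

theorem stmt1 (p : ℝ) (hp0 : 0 < p) (hp1 : p < 1) (k : ℕ) (hk : 1 ≤ k)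
    (μ : Measure (ℕ → Bool)) [IsProbabilityMeasure μ]
    (hμ : ∀ (n : ℕ) (b : ℕ → Bool),
      μ {ω | ∀ i, 1 ≤ i → i ≤ n → ω i = b i}
        = ENNReal.ofReal (∏ i ∈ Finset.Icc 1 n, if b i = true then p else 1 - p))
    (h : ℤ → ℝ) (h0 : ∀ v : ℤ, v ≤ 0 → h v = 0) (h1 : h 1 = 1)
    (hrec : ∀ v : ℤ, 2 ≤ v →
      h v = (1 - p) * ∑ i ∈ Finset.Icc 1 k, p ^ (i - 1) * h (v - i)) :
    ∀ v : ℕ, 1 ≤ v →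
      (μ {ω | waitingTime k ω = v}).toReal = h ((v : ℤ) - k + 1) * p ^ k :=
  stmt1_general p hp0 hp1 k μ hμ h h0 h1 hrec
end

section
/- Fix an integer k ≥ 1 and let p = 1/2. For every integer v ≥ k, P(V(k) = v) = f_{v-k+1}·(1/2)^v, where (f_i) is the Fibonacci sequence of order k. -/
/-!
A word of length `v` whose first run of `k` successes ends at trial `v > k` begins with
`1^(j-1) 0` for a unique `j ≤ k`, and the rest is a word of length `v - j` with the same
property. So the numbers `c v` of such words satisfy `c v = ∑ j ∈ [1, k], c (v - j)`, with
`c v = 0` for `v < k` and `c k = 1`: this is the order-`k` Fibonacci recursion, shifted by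
`k - 1`. The event `{V(k) = v}` depends only on the first `v` trials, so it is the disjoint
union of `c v` cylinders, each of probability `2⁻ᵛ`.
-/

open MeasureTheory Finset

def runEnds (k : ℕ) (ω : ℕ → Bool) : Set ℕ :=
  {n | k ≤ n ∧ ∀ i ∈ Icc (n - k + 1) n, ω i = true}

section Runs

variable {k v : ℕ} {ω : ℕ → Bool}

lemma waitingTime_eq_iff_isLeast (hkv : k ≤ v) :
    waitingTime k ω = v ↔ IsLeast (runEnds k ω) v := by
  refine ⟨fun h => ?_, fun h => h.csInf_eq⟩
  change sInf (runEnds k ω) = v at h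
  rcases (runEnds k ω).eq_empty_or_nonempty with hempty | hne
  -- junk value `sInf ∅ = 0`: then `k = v = 0`, but every `n` ends a run of length `0`
  · rw [hempty, Nat.sInf_empty] at h
    have hk : k = 0 := by omega
    subst h hk
    exact absurd hempty (Set.nonempty_iff_ne_empty.1 ⟨0, le_rfl, by simp⟩)
  · exact h ▸ ⟨Nat.sInf_mem hne, fun n hn => Nat.sInf_le hn⟩

lemma mem_runEnds_congr {ω' : ℕ → Bool} (h : ∀ i ∈ Icc 1 v, ω i = ω' i) {n : ℕ} (hn : n ≤ v) :
    n ∈ runEnds k ω ↔ n ∈ runEnds k ω' := by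
  refine and_congr_right fun _ => forall₂_congr fun i hi => ?_
  rw [h i (by simp only [mem_Icc] at hi ⊢; omega)]

lemma IsLeast.runEnds_congr {ω' : ℕ → Bool} (h : ∀ i ∈ Icc 1 v, ω i = ω' i)
    (hv : IsLeast (runEnds k ω) v) : IsLeast (runEnds k ω') v :=
  ⟨(mem_runEnds_congr h le_rfl).1 hv.1, fun _ hn =>
    le_of_not_gt fun hlt => (hv.2 ((mem_runEnds_congr h hlt.le).2 hn)).not_gt hlt⟩

lemma mem_runEnds_iff_of_false {j n : ℕ} (hjk : j ≤ k) (hj : ω j = false) :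
    n ∈ runEnds k ω ↔ j ≤ n ∧ n - j ∈ runEnds k (fun i => ω (i + j)) := by
  simp only [runEnds, Set.mem_ofPred_eq, mem_Icc]
  constructor
  · rintro ⟨hkn, hrun⟩
    have hjn : j + k ≤ n := by
      by_contra hlt
      simpa [hj] using hrun j ⟨by omega, by omega⟩
    exact ⟨by omega, by omega, fun i hi => hrun (i + j) ⟨by omega, by omega⟩⟩
  · rintro ⟨hjn, hkn, hrun⟩
    refine ⟨by omega, fun i hi => ?_⟩
    simpa [Nat.sub_add_cancel (show j ≤ i by omega)] using hrun (i - j) ⟨by omega, by omega⟩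

lemma isLeast_runEnds_iff_of_false {j : ℕ} (hjk : j ≤ k) (hj : ω j = false) :
    IsLeast (runEnds k ω) v ↔ j ≤ v ∧ IsLeast (runEnds k (fun i => ω (i + j))) (v - j) := by
  simp only [IsLeast, lowerBounds, Set.mem_ofPred_eq, mem_runEnds_iff_of_false hjk hj]
  constructor
  · rintro ⟨⟨hjv, hv⟩, hmin⟩
    refine ⟨hjv, hv, fun m hm => ?_⟩
    have := @hmin (m + j) ⟨Nat.le_add_left j m, by rwa [Nat.add_sub_cancel]⟩
    omega
  · rintro ⟨hjv, hv, hmin⟩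
    exact ⟨⟨hjv, hv⟩, fun a ⟨_, ha⟩ => by have := hmin ha; omega⟩

lemma IsLeast.exists_first_false_runEnds (hkv : k < v) (hv : IsLeast (runEnds k ω) v) :
    ∃ j ∈ Icc 1 k, (∀ i ∈ Ico 1 j, ω i = true) ∧ ω j = false := by
  classical
  have hgap : ∃ i, 1 ≤ i ∧ i ≤ k ∧ ω i = false := by
    by_contra! hall
    refine (hv.2 ⟨le_rfl, fun i hi => ?_⟩).not_gt hkv
    simp only [Nat.sub_self, zero_add, mem_Icc] at hi
    simpa using hall i hi.1 hi.2
  have hmin := Nat.find_spec hgap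
  refine ⟨Nat.find hgap, mem_Icc.2 ⟨hmin.1, hmin.2.1⟩, fun i hi => ?_, hmin.2.2⟩
  rw [mem_Ico] at hi
  have := Nat.find_min hgap hi.2
  simp only [not_and, Bool.not_eq_false] at this
  exact this hi.1 (by omega)

end Runs

/-- A binary word of length `v` is encoded by its set of success positions, a subset of `[1, v]`;
`prependBlock j s` is the word `1^(j-1) 0` followed by the word `s`. -/
def prependBlock (j : ℕ) (s : Finset ℕ) : Finset ℕ :=
  Ico 1 j ∪ s.map (addRightEmbedding j)

section Words

variable {j x : ℕ} {s : Finset ℕ}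

lemma mem_prependBlock : x ∈ prependBlock j s ↔ x ∈ Ico 1 j ∨ (j ≤ x ∧ x - j ∈ s) := by
  simp only [prependBlock, mem_union, mem_map, addRightEmbedding_apply]
  refine or_congr_right ⟨?_, fun h => ⟨x - j, h.2, Nat.sub_add_cancel h.1⟩⟩
  rintro ⟨a, ha, rfl⟩
  simpa using ha

lemma add_mem_prependBlock : x + j ∈ prependBlock j s ↔ x ∈ s := by
  simp [mem_prependBlock]

lemma self_notMem_prependBlock (h : 0 ∉ s) : j ∉ prependBlock j s := by
  simpa using (add_mem_prependBlock (x := 0)).not.2 h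

lemma prependBlock_injective (j : ℕ) : Function.Injective (prependBlock j) := fun s t h => by
  ext x
  rw [← add_mem_prependBlock (j := j), h, add_mem_prependBlock]

lemma prependBlock_preimage (hpre : Ico 1 j ⊆ s) (hj : j ∉ s) (h0 : 0 ∉ s) :
    prependBlock j (s.preimage (· + j) (add_left_injective j).injOn) = s := by
  ext x
  rw [mem_prependBlock, mem_preimage]
  constructor
  · rintro (hx | ⟨hjx, hx⟩)
    · exact hpre hx
    · rwa [Nat.sub_add_cancel hjx] at hx
  · intro hx
    rcases lt_trichotomy x j with hlt | rfl | hgt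
    · exact Or.inl (mem_Ico.2 ⟨Nat.one_le_iff_ne_zero.2 (ne_of_mem_of_not_mem hx h0), hlt⟩)
    · exact absurd hx hj
    · exact Or.inr ⟨hgt.le, by rwa [Nat.sub_add_cancel hgt.le]⟩

end Words

open Classical in
noncomputable def firstRunWords (k v : ℕ) : Finset (Finset ℕ) :=
  (Icc 1 v).powerset.filter fun s => IsLeast (runEnds k (fun i => decide (i ∈ s))) v

section FirstRunWords

variable {k v : ℕ} {s : Finset ℕ}

lemma mem_firstRunWords :
    s ∈ firstRunWords k v ↔ s ⊆ Icc 1 v ∧ IsLeast (runEnds k (fun i => decide (i ∈ s))) v := by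
  simp [firstRunWords]

lemma firstRunWords_of_lt (h : v < k) : firstRunWords k v = ∅ :=
  eq_empty_of_forall_notMem fun _ hs => (mem_firstRunWords.1 hs).2.1.1.not_gt h

lemma firstRunWords_self : firstRunWords k k = {Icc 1 k} := by
  ext s
  rw [mem_firstRunWords, mem_singleton]
  constructor
  · rintro ⟨hsub, hleast⟩
    refine hsub.antisymm fun i hi => ?_
    simpa using hleast.1.2 i (by simpa using hi)
  · rintro rfl
    exact ⟨subset_rfl, ⟨le_rfl, fun i hi => by simp_all⟩, fun _ hn => hn.1⟩

lemma prependBlock_mem_firstRunWords {j : ℕ} {t : Finset ℕ} (hkv : k < v) (hj : j ∈ Icc 1 k)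
    (ht : t ∈ firstRunWords k (v - j)) : prependBlock j t ∈ firstRunWords k v := by
  rw [mem_Icc] at hj
  obtain ⟨htsub, htleast⟩ := mem_firstRunWords.1 ht
  have h0 : 0 ∉ t := fun h => by simpa using htsub h
  refine mem_firstRunWords.2 ⟨fun x hx => ?_, ?_⟩
  · rcases mem_prependBlock.1 hx with hx | ⟨hjx, hx⟩
    · rw [mem_Ico] at hx; rw [mem_Icc]; omega
    · have := mem_Icc.1 (htsub hx); rw [mem_Icc]; omega
  · rw [isLeast_runEnds_iff_of_false hj.2 (by simpa using self_notMem_prependBlock h0)]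
    exact ⟨by omega, by simpa [add_mem_prependBlock] using htleast⟩

lemma exists_prependBlock_eq_of_mem_firstRunWords (hkv : k < v) (hs : s ∈ firstRunWords k v) :
    ∃ j ∈ Icc 1 k, ∃ t ∈ firstRunWords k (v - j), prependBlock j t = s := by
  obtain ⟨hsub, hleast⟩ := mem_firstRunWords.1 hs
  obtain ⟨j, hj, hpre, hjs⟩ := hleast.exists_first_false_runEnds hkv
  rw [isLeast_runEnds_iff_of_false (mem_Icc.1 hj).2 hjs] at hleast
  simp only [decide_eq_false_iff_not] at hjs
  have h0 : 0 ∉ s := fun h => by simpa using hsub h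
  refine ⟨j, hj, _, mem_firstRunWords.2 ⟨fun x hx => ?_, by simpa using hleast.2⟩,
    prependBlock_preimage (fun i hi => by simpa using hpre i hi) hjs h0⟩
  rw [mem_preimage] at hx
  have := mem_Icc.1 (hsub hx)
  have : x ≠ 0 := by rintro rfl; exact hjs (by simpa using hx)
  rw [mem_Icc]; omega

lemma firstRunWords_eq_biUnion (hkv : k < v) :
    firstRunWords k v =
      (Icc 1 k).biUnion fun j => (firstRunWords k (v - j)).image (prependBlock j) := by
  ext s
  simp only [mem_biUnion, mem_image]
  refine ⟨exists_prependBlock_eq_of_mem_firstRunWords hkv, ?_⟩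
  rintro ⟨j, hj, t, ht, rfl⟩
  exact prependBlock_mem_firstRunWords hkv hj ht

lemma card_firstRunWords_eq_sum (hkv : k < v) :
    #(firstRunWords k v) = ∑ j ∈ Icc 1 k, #(firstRunWords k (v - j)) := by
  rw [firstRunWords_eq_biUnion hkv, card_biUnion]
  · exact sum_congr rfl fun j _ => card_image_of_injective _ (prependBlock_injective j)
  · intro j hj j' hj' hne
    wlog hlt : j < j' generalizing j j'
    · exact (this hj' hj hne.symm (by omega)).symm
    refine disjoint_left.2 fun u hu hu' => ?_
    obtain ⟨t, ht, rfl⟩ := mem_image.1 hu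
    obtain ⟨t', _, ht'⟩ := mem_image.1 hu'
    have h0 : 0 ∉ t := fun h => by simpa using (mem_firstRunWords.1 ht).1 h
    have hjj' : j ∈ Ico 1 j' := mem_Ico.2 ⟨(mem_Icc.1 hj).1, hlt⟩
    exact self_notMem_prependBlock h0 (ht' ▸ mem_prependBlock.2 (Or.inl hjj'))

end FirstRunWords

lemma card_firstRunWords {k : ℕ} {f : ℤ → ℝ} (hf0 : ∀ i : ℤ, i < 1 → f i = 0) (hf1 : f 1 = 1)
    (hfrec : ∀ i : ℤ, 2 ≤ i → f i = ∑ j ∈ Icc 1 k, f (i - j)) (v : ℕ) :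
    (#(firstRunWords k v) : ℝ) = f ((v : ℤ) - k + 1) := by
  induction v using Nat.strong_induction_on with
  | _ v ih =>
    rcases lt_trichotomy v k with hlt | rfl | hgt
    · rw [firstRunWords_of_lt hlt, card_empty, Nat.cast_zero, hf0 _ (by omega)]
    · rw [firstRunWords_self, card_singleton, Nat.cast_one, sub_self, zero_add, hf1]
    · rw [card_firstRunWords_eq_sum hgt, Nat.cast_sum, hfrec _ (by omega)]
      refine sum_congr rfl fun j hj => ?_
      rw [mem_Icc] at hj
      rw [ih (v - j) (by omega)]
      congr 1
      omega

def prefixCylinder (v : ℕ) (s : Finset ℕ) : Set (ℕ → Bool) :=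
  {ω | ∀ i, 1 ≤ i → i ≤ v → ω i = decide (i ∈ s)}

section Cylinders

variable {v : ℕ}

lemma measurableSet_prefixCylinder (s : Finset ℕ) : MeasurableSet (prefixCylinder v s) := by
  simp only [prefixCylinder, Set.ofPred_forall]
  exact .iInter fun i => .iInter fun _ => .iInter fun _ =>
    measurable_pi_apply i (measurableSet_singleton _)

lemma pairwiseDisjoint_prefixCylinder :
    ((Icc 1 v).powerset : Set (Finset ℕ)).PairwiseDisjoint (prefixCylinder v) := by
  intro s hs t ht hne
  refine Set.disjoint_left.2 fun ω hωs hωt => hne ?_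
  have hs' := mem_powerset.1 hs
  have ht' := mem_powerset.1 ht
  ext i
  by_cases hi : i ∈ Icc 1 v
  · rw [mem_Icc] at hi
    simpa [hωs i hi.1 hi.2] using hωt i hi.1 hi.2
  · exact ⟨fun h => absurd (hs' h) hi, fun h => absurd (ht' h) hi⟩

open Classical in
lemma setOf_eq_biUnion_prefixCylinder {P : (ℕ → Bool) → Prop}
    (hP : ∀ ω ω', (∀ i ∈ Icc 1 v, ω i = ω' i) → P ω → P ω') :
    {ω | P ω} = ⋃ s ∈ (Icc 1 v).powerset.filter (fun s => P (fun i => decide (i ∈ s))),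
      prefixCylinder v s := by
  ext ω
  simp only [Set.mem_ofPred_eq, Set.mem_iUnion, mem_filter, mem_powerset, exists_prop,
    prefixCylinder]
  constructor
  · intro hω
    have hagree : ∀ i ∈ Icc 1 v, ω i = decide (i ∈ (Icc 1 v).filter (ω · = true)) := by
      intro i hi
      simp [hi]
    exact ⟨_, ⟨filter_subset _ _, hP _ _ hagree hω⟩,
      fun i h1 h2 => hagree i (mem_Icc.2 ⟨h1, h2⟩)⟩
  · rintro ⟨s, ⟨-, hs⟩, hω⟩
    exact hP _ _ (fun i hi => (hω i (mem_Icc.1 hi).1 (mem_Icc.1 hi).2).symm) hs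

open Classical in
lemma measure_setOf_eq_sum_prefixCylinder {μ : Measure (ℕ → Bool)} {p : ℝ}
    (hμ : ∀ (n : ℕ) (b : ℕ → Bool),
      μ {ω | ∀ i, 1 ≤ i → i ≤ n → ω i = b i}
        = ENNReal.ofReal (∏ i ∈ Icc 1 n, if b i = true then p else 1 - p))
    {P : (ℕ → Bool) → Prop} (hP : ∀ ω ω', (∀ i ∈ Icc 1 v, ω i = ω' i) → P ω → P ω') :
    μ {ω | P ω} = ∑ s ∈ (Icc 1 v).powerset.filter (fun s => P (fun i => decide (i ∈ s))),
      ENNReal.ofReal (∏ i ∈ Icc 1 v, if i ∈ s then p else 1 - p) := by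
  rw [setOf_eq_biUnion_prefixCylinder hP, measure_biUnion_finset
    (pairwiseDisjoint_prefixCylinder.subset (coe_subset.2 (filter_subset _ _)))
    (fun s _ => measurableSet_prefixCylinder s)]
  refine sum_congr rfl fun s _ => ?_
  simp only [prefixCylinder, hμ, decide_eq_true_eq]

end Cylinders

theorem stmt2_general (p : ℝ) (hp : p = 1 / 2)
    (k : ℕ)
    (μ : Measure (ℕ → Bool))
    (hμ : ∀ (n : ℕ) (b : ℕ → Bool),
      μ {ω | ∀ i, 1 ≤ i → i ≤ n → ω i = b i}
        = ENNReal.ofReal (∏ i ∈ Finset.Icc 1 n, if b i = true then p else 1 - p))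
    -- `f` is the Fibonacci sequence of order `k`
    (f : ℤ → ℝ) (hf0 : ∀ i : ℤ, i < 1 → f i = 0) (hf1 : f 1 = 1)
    (hfrec : ∀ i : ℤ, 2 ≤ i → f i = ∑ j ∈ Finset.Icc 1 k, f (i - j)) :
    ∀ v : ℕ, k ≤ v →
      (μ {ω | waitingTime k ω = v}).toReal = f ((v : ℤ) - k + 1) * (1 / 2) ^ v := by
  subst hp
  intro v hkv
  have hfair : ∀ s : Finset ℕ,
      ∏ i ∈ Icc 1 v, (if i ∈ s then (1 / 2 : ℝ) else 1 - 1 / 2) = (1 / 2) ^ v := fun s => by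
    rw [prod_congr rfl fun i _ => (show _ = (1 / 2 : ℝ) by split_ifs <;> norm_num), prod_const,
      Nat.card_Icc, Nat.add_sub_cancel]
  have hevent : {ω | waitingTime k ω = v} = {ω | IsLeast (runEnds k ω) v} :=
    Set.ext fun ω => waitingTime_eq_iff_isLeast hkv
  rw [hevent, measure_setOf_eq_sum_prefixCylinder hμ fun _ _ h hω => hω.runEnds_congr h]
  simp only [hfair]
  rw [← firstRunWords, sum_const, nsmul_eq_mul, ENNReal.toReal_mul, ENNReal.toReal_natCast,
    ENNReal.toReal_ofReal (by positivity), card_firstRunWords hf0 hf1 hfrec]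

theorem stmt2 (p : ℝ) (hp0 : 0 < p) (hp1 : p < 1) (hp : p = 1 / 2)
    (k : ℕ) (hk : 1 ≤ k)
    (μ : Measure (ℕ → Bool)) [IsProbabilityMeasure μ]
    (hμ : ∀ (n : ℕ) (b : ℕ → Bool),
      μ {ω | ∀ i, 1 ≤ i → i ≤ n → ω i = b i}
        = ENNReal.ofReal (∏ i ∈ Finset.Icc 1 n, if b i = true then p else 1 - p))
    -- `f` is the Fibonacci sequence of order `k`
    (f : ℤ → ℝ) (hf0 : ∀ i : ℤ, i < 1 → f i = 0) (hf1 : f 1 = 1)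
    (hfrec : ∀ i : ℤ, 2 ≤ i → f i = ∑ j ∈ Finset.Icc 1 k, f (i - j)) :
    ∀ v : ℕ, k ≤ v →
      (μ {ω | waitingTime k ω = v}).toReal = f ((v : ℤ) - k + 1) * (1 / 2) ^ v :=
  stmt2_general p hp k μ hμ f hf0 hf1 hfrec
end

section
/- (Dresden–Du simplified Binet formula.) Let k ≥ 2 be an integer and let α : Fin k → ℂ be an injective enumeration of the roots of the polynomial x^k − x^{k−1} − ⋯ − x − 1 (so each α_i is a root, and they are pairwise distinct). Then for every integer n ≥ 1, the n-th k-generalized Fibonacci number satisfies (F_n^{(k)} : ℂ) = ∑_{i=1}^{k} ((α_i − 1)/(2 + (k+1)(α_i − 2)))·α_i^{n−1}. -/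
open Finset Polynomial

/-- Lagrange identity: power sums over distinct nodes weighted by inverse nodal weights. -/
lemma lagA {k : ℕ} (α : Fin k → ℂ) (hinj : Function.Injective α) (m : ℕ) (hm : m < k) :
    ∑ i : Fin k, α i ^ m / ∏ j ∈ Finset.univ.erase i, (α i - α j) =
      if m = k - 1 then 1 else 0 := by
  classical
  set d : Fin k → ℂ := fun i => ∏ j ∈ Finset.univ.erase i, (α i - α j) with hd
  have hdne : ∀ i, d i ≠ 0 := by
    intro i
    rw [hd]
    refine Finset.prod_ne_zero_iff.2 fun j hj => sub_ne_zero.2 ?_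
    exact fun h => (Finset.mem_erase.1 hj).1 (hinj h.symm)
  set N : ℂ[X] :=
    (∑ i : Fin k, C (α i ^ m / d i) * Lagrange.nodal (Finset.univ.erase i) α) - X ^ m with hN
  have hdeval : ∀ i, eval (α i) (Lagrange.nodal (Finset.univ.erase i) α) = d i := by
    intro i; rw [Lagrange.eval_nodal, hd]
  have heval : ∀ l, N.eval (α l) = 0 := by
    intro l
    rw [hN]
    simp only [eval_sub, eval_finset_sum, eval_mul, eval_C, eval_pow, eval_X]
    rw [Finset.sum_eq_single l]
    · rw [hdeval l, div_mul_cancel₀ _ (hdne l), sub_self]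
    · intro i _ hil
      rw [Lagrange.eval_nodal_at_node (Finset.mem_erase.2 ⟨hil.symm, Finset.mem_univ l⟩), mul_zero]
    · intro h; exact absurd (Finset.mem_univ l) h
  have hdegnodal : ∀ i : Fin k, (Lagrange.nodal (Finset.univ.erase i) α).natDegree = k - 1 := by
    intro i
    rw [Lagrange.natDegree_nodal, Finset.card_erase_of_mem (Finset.mem_univ i),
      Finset.card_univ, Fintype.card_fin]
  have hdeg : N.natDegree < k := by
    have h1 : (∑ i : Fin k, C (α i ^ m / d i) *
        Lagrange.nodal (Finset.univ.erase i) α).natDegree ≤ k - 1 := by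
      refine Polynomial.natDegree_sum_le_of_forall_le _ _ fun i _ => ?_
      refine le_trans (Polynomial.natDegree_mul_le) ?_
      rw [Polynomial.natDegree_C, hdegnodal i, zero_add]
    have h2 : ((X : ℂ[X]) ^ m).natDegree ≤ k - 1 := by
      rw [Polynomial.natDegree_X_pow]; omega
    have := Polynomial.natDegree_sub_le_iff_left (p := (∑ i : Fin k, C (α i ^ m / d i) *
        Lagrange.nodal (Finset.univ.erase i) α)) (q := (X : ℂ[X]) ^ m) (n := k - 1) h2
    have h3 := this.2 h1
    rw [hN]
    omega
  have hzero : N = 0 := by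
    refine Polynomial.eq_zero_of_natDegree_lt_card_of_eval_eq_zero N hinj heval ?_
    rwa [Fintype.card_fin]
  have hcoeff := congrArg (fun p : ℂ[X] => p.coeff (k - 1)) hzero
  simp only [coeff_zero] at hcoeff
  rw [hN] at hcoeff
  rw [Polynomial.coeff_sub, Polynomial.finset_sum_coeff] at hcoeff
  simp only [Polynomial.coeff_C_mul] at hcoeff
  have hmon : ∀ i : Fin k, (Lagrange.nodal (Finset.univ.erase i) α).coeff (k - 1) = 1 := by
    intro i
    have := (Lagrange.nodal_monic (s := Finset.univ.erase i) (v := α)).coeff_natDegree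
    rwa [hdegnodal i] at this
  simp only [hmon, mul_one] at hcoeff
  rw [Polynomial.coeff_X_pow] at hcoeff
  rw [sub_eq_zero] at hcoeff
  rw [hcoeff]
  by_cases h : m = k - 1 <;> simp [h, eq_comm]

theorem stmt3 (k : ℕ) (hk : 2 ≤ k)
    -- `F` is the sequence of `k`-generalized Fibonacci numbers
    (F : ℤ → ℤ) (hF0 : ∀ n : ℤ, n ≤ 0 → F n = 0) (hF1 : F 1 = 1)
    (hFrec : ∀ n : ℤ, 2 ≤ n → F n = ∑ i ∈ Finset.Icc 1 k, F (n - i))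
    -- `α` is an injective enumeration of the roots of `x^k - x^(k-1) - ⋯ - x - 1`
    (α : Fin k → ℂ) (hinj : Function.Injective α)
    (hroot : ∀ i : Fin k, (α i) ^ k = ∑ j ∈ Finset.range k, (α i) ^ j) :
    ∀ n : ℕ, 1 ≤ n →
      (F n : ℂ) = ∑ i : Fin k,
        ((α i - 1) / (2 + (k + 1) * (α i - 2))) * (α i) ^ (n - 1) := by
  classical
  have hα0 : ∀ i, α i ≠ 0 := by
    intro i h
    have := hroot i
    rw [h] at this
    rw [zero_pow (by omega), Finset.sum_eq_single 0] at this
    · simp at this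
    · intro j hj hj0; exact zero_pow hj0
    · intro h; exact absurd (Finset.mem_range.2 (by omega)) h
  have hα1 : ∀ i, α i ≠ 1 := by
    intro i h
    have := hroot i
    rw [h] at this
    have h2 : (1:ℂ) = (k:ℂ) := by simpa using this
    have h3 : k = 1 := by exact_mod_cast h2.symm
    omega
  set d : Fin k → ℂ := fun i => ∏ j ∈ Finset.univ.erase i, (α i - α j) with hd
  have hdne : ∀ i, d i ≠ 0 := by
    intro i
    rw [hd]
    refine Finset.prod_ne_zero_iff.2 fun j hj => sub_ne_zero.2 ?_
    exact fun h => (Finset.mem_erase.1 hj).1 (hinj h.symm)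
  -- the nodal polynomial equals the characteristic polynomial
  set q : ℂ[X] := Lagrange.nodal Finset.univ α with hqdef
  set r : ℂ[X] := X ^ k - ∑ j ∈ Finset.range k, X ^ j with hrdef
  have hqmon : q.Monic := Lagrange.nodal_monic
  have hqdeg : q.natDegree = k := by
    rw [hqdef, Lagrange.natDegree_nodal, Finset.card_univ, Fintype.card_fin]
  have hSdeg : (∑ j ∈ Finset.range k, (X : ℂ[X]) ^ j).degree < ((X : ℂ[X]) ^ k).degree := by
    rw [Polynomial.degree_X_pow]
    refine lt_of_le_of_lt (Polynomial.degree_sum_le _ _) ?_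
    rw [Finset.sup_lt_iff (by exact_mod_cast WithBot.bot_lt_coe k)]
    intro j hj
    rw [Polynomial.degree_X_pow]
    exact_mod_cast Finset.mem_range.1 hj
  have hrdeg : r.degree = (k : ℕ) := by
    rw [hrdef, Polynomial.degree_sub_eq_left_of_degree_lt hSdeg, Polynomial.degree_X_pow]
  have hrlead : r.leadingCoeff = 1 := by
    rw [hrdef, Polynomial.leadingCoeff_sub_of_degree_lt hSdeg]
    exact Polynomial.monic_X_pow k
  have hreval : ∀ i, r.eval (α i) = 0 := by
    intro i
    rw [hrdef]
    simp only [eval_sub, eval_pow, eval_X, eval_finset_sum]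
    rw [hroot i, sub_self]
  have hqr : q = r := by
    rcases eq_or_ne (q - r) 0 with h0 | h0
    · exact sub_eq_zero.1 h0
    have hqr0 : (q - r).degree < (k : ℕ) := by
      have := Polynomial.degree_sub_lt (by rw [hrdeg, Polynomial.degree_eq_natDegree hqmon.ne_zero, hqdeg]) hqmon.ne_zero (by rw [hrlead]; exact hqmon.leadingCoeff)
      rwa [Polynomial.degree_eq_natDegree hqmon.ne_zero, hqdeg] at this
    have : q - r = 0 := by
      refine Polynomial.eq_zero_of_natDegree_lt_card_of_eval_eq_zero _ hinj ?_ ?_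
      · intro i
        rw [Polynomial.eval_sub, hreval i, Lagrange.eval_nodal_at_node (Finset.mem_univ i),
          sub_self]
      · rw [Fintype.card_fin]
        exact (Polynomial.natDegree_lt_iff_degree_lt h0).2 hqr0
    exact sub_eq_zero.1 this
  -- derivative identity
  have hgeom : (∑ j ∈ Finset.range k, (X : ℂ[X]) ^ j) * (X - 1) = X ^ k - 1 :=
    geom_sum_mul _ _
  have hXq : (X - 1) * q = X ^ (k + 1) - X ^ k - X ^ k + 1 := by
    rw [hqr, hrdef]
    have hpow : (X : ℂ[X]) ^ (k + 1) = X * X ^ k := by ring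
    linear_combination (-1 : ℂ[X]) * hgeom + hpow
  have hderiv := congrArg Polynomial.derivative hXq
  have hqev : ∀ i, q.eval (α i) = 0 := fun i => Lagrange.eval_nodal_at_node (Finset.mem_univ i)
  have hq'ev : ∀ i, (Polynomial.derivative q).eval (α i) = d i := by
    intro i
    rw [hqdef, Lagrange.eval_nodal_derivative_eval_node_eq (Finset.mem_univ i),
      Lagrange.eval_nodal, hd]
  have hB : ∀ i, (α i - 1) * d i = α i ^ (k - 1) * ((k + 1) * α i - 2 * k) := by
    intro i
    have h1 := congrArg (Polynomial.eval (α i)) hderiv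
    simp only [Polynomial.derivative_mul, Polynomial.derivative_sub, Polynomial.derivative_add,
      Polynomial.derivative_one, Polynomial.derivative_X, Polynomial.derivative_X_pow,
      eval_mul, eval_add, eval_sub, eval_one, eval_X, eval_pow, eval_C,
      hqev i, hq'ev i, sub_zero, zero_mul, zero_add, one_mul, mul_zero, add_zero] at h1
    have hks : k + 1 - 1 = k := by omega
    have hk1 : k = (k - 1) + 1 := by omega
    rw [hks] at h1
    rw [h1]
    have hpow : (α i) ^ k = α i ^ (k - 1) * α i := by
      conv_lhs => rw [hk1]
      ring
    rw [hpow]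
    push_cast
    ring
  have hden : ∀ i, (2 + ((k : ℂ) + 1) * (α i - 2)) ≠ 0 := by
    intro i h
    have h2 : ((k : ℂ) + 1) * α i - 2 * k = 0 := by linear_combination h
    have := hB i
    rw [h2, mul_zero] at this
    exact (mul_ne_zero (sub_ne_zero.2 (hα1 i)) (hdne i)) this
  have hc : ∀ i, (α i - 1) / (2 + ((k : ℂ) + 1) * (α i - 2)) = α i ^ (k - 1) / d i := by
    intro i
    rw [div_eq_div_iff (hden i) (hdne i)]
    linear_combination hB i
  -- main induction
  have key : ∀ m : ℕ, (F ((m : ℤ) + 2 - k) : ℂ) = ∑ i, α i ^ m / d i := by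
    intro m
    induction m using Nat.strong_induction_on with
    | _ m ih =>
      rcases lt_or_ge m k with hmk | hmk
      · have hsum := lagA α hinj m hmk
        rw [hd] at *
        rw [hsum]
        by_cases hm1 : m = k - 1
        · have : (m : ℤ) + 2 - k = 1 := by omega
          rw [this, hF1, if_pos hm1]
          norm_num
        · have : (m : ℤ) + 2 - k ≤ 0 := by omega
          rw [hF0 _ this, if_neg hm1]
          norm_num
      · have h2 : (2 : ℤ) ≤ (m : ℤ) + 2 - k := by omega
        rw [hFrec _ h2]
        push_cast
        have hterm : ∀ i ∈ Finset.Icc 1 k,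
            (F ((m : ℤ) + 2 - k - i) : ℂ) = ∑ j, α j ^ (m - i) / d j := by
          intro i hi
          rw [Finset.mem_Icc] at hi
          have hlt : m - i < m := by omega
          have : ((m : ℤ) + 2 - k - i) = ((m - i : ℕ) : ℤ) + 2 - k := by
            push_cast [Nat.cast_sub (le_trans hi.2 hmk)]
            ring
          rw [this]
          exact ih _ hlt
        rw [Finset.sum_congr rfl hterm, Finset.sum_comm]
        refine Finset.sum_congr rfl fun j _ => ?_
        rw [← Finset.sum_div]
        congr 1
        have h3 : α j ^ m = ∑ t ∈ Finset.range k, α j ^ (m - k + t) := by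
          calc α j ^ m = α j ^ (m - k) * α j ^ k := by
                rw [← pow_add]; congr 1; omega
            _ = ∑ t ∈ Finset.range k, α j ^ (m - k) * α j ^ t := by
                rw [hroot j, Finset.mul_sum]
            _ = ∑ t ∈ Finset.range k, α j ^ (m - k + t) := by
                refine Finset.sum_congr rfl fun t _ => ?_
                rw [pow_add]
        rw [h3]
        refine Finset.sum_nbij' (fun i => k - i) (fun t => k - t) ?_ ?_ ?_ ?_ ?_
        · intro a ha; rw [Finset.mem_Icc] at ha; refine Finset.mem_range.2 ?_; omega
        · intro a ha; rw [Finset.mem_range] at ha; refine Finset.mem_Icc.2 ?_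
          omega
        · intro a ha; rw [Finset.mem_Icc] at ha; omega
        · intro a ha; rw [Finset.mem_range] at ha; omega
        · intro a ha; rw [Finset.mem_Icc] at ha; congr 1; omega
  intro n hn
  have hkey := key (n + k - 2)
  have hcast : ((n + k - 2 : ℕ) : ℤ) + 2 - k = (n : ℤ) := by
    push_cast [Nat.cast_sub (by omega : 2 ≤ n + k)]
    ring
  rw [hcast] at hkey
  rw [hkey]
  refine Finset.sum_congr rfl fun i _ => ?_
  rw [hc i]
  rw [div_mul_eq_mul_div, ← pow_add]
  congr 2
  omega
end

section
/- Let R₁ = (q + √(q² + 4pq))/2 and R₂ = (q − √(q² + 4pq))/2 (the roots of x² = qx + pq). Then for every integer v ≥ 2, P(V(2) = v) = p²·(R₁^{v−1} − R₂^{v−1})/(R₁ − R₂). -/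
open MeasureTheory Finset

namespace Stmt4Aux

open scoped Classical

/-- 1-indexed: trials `1..v`; waiting time is `v` -/
def goodN (v : ℕ) (c : ℕ → Bool) : Prop :=
  c (v - 1) = true ∧ c v = true ∧ ∀ n, 2 ≤ n → n < v → ¬(c (n - 1) = true ∧ c n = true)

lemma goodN_congr {v : ℕ} (hv : 2 ≤ v) {c c' : ℕ → Bool}
    (h : ∀ i, 1 ≤ i → i ≤ v → c i = c' i) : goodN v c ↔ goodN v c' := by
  unfold goodN
  rw [h (v - 1) (by omega) (by omega), h v (by omega) le_rfl]
  refine and_congr_right' (and_congr_right' (forall_congr' fun n => ?_))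
  refine imp_congr_right fun hn => imp_congr_right fun hnv => ?_
  rw [h (n - 1) (by omega) (by omega), h n (by omega) (by omega)]

lemma waiting_eq_iff {v : ℕ} (hv : 2 ≤ v) (ω : ℕ → Bool) :
    waitingTime 2 ω = v ↔ goodN v ω := by
  have hset : {n | 2 ≤ n ∧ ∀ i ∈ Finset.Icc (n - 2 + 1) n, ω i = true}
      = {n | 2 ≤ n ∧ ω (n - 1) = true ∧ ω n = true} := by
    ext n
    simp only [Set.mem_setOf_eq]
    constructor
    · rintro ⟨hn, h⟩
      exact ⟨hn, h (n - 1) (by simp [Finset.mem_Icc]; omega),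
        h n (by simp [Finset.mem_Icc]; omega)⟩
    · rintro ⟨hn, h1, h2⟩
      refine ⟨hn, fun i hi => ?_⟩
      simp only [Finset.mem_Icc] at hi
      have : i = n - 1 ∨ i = n := by omega
      rcases this with rfl | rfl
      · exact h1
      · exact h2
  unfold waitingTime
  rw [hset]
  set T : Set ℕ := {n | 2 ≤ n ∧ ω (n - 1) = true ∧ ω n = true} with hTdef
  constructor
  · intro h
    have hne : T.Nonempty := by
      by_contra hc
      rw [Set.not_nonempty_iff_eq_empty] at hc
      rw [hc, Nat.sInf_empty] at h
      omega
    have hv' := Nat.sInf_mem hne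
    rw [h] at hv'
    refine ⟨hv'.2.1, hv'.2.2, fun n hn hnv hpair => ?_⟩
    have hle : sInf T ≤ n := Nat.sInf_le ⟨hn, hpair.1, hpair.2⟩
    omega
  · rintro ⟨h1, h2, h3⟩
    have hvmem : v ∈ T := ⟨hv, h1, h2⟩
    have hle : sInf T ≤ v := Nat.sInf_le hvmem
    rcases eq_or_lt_of_le hle with h | h
    · exact h
    · exfalso
      have hmem := Nat.sInf_mem (⟨v, hvmem⟩ : T.Nonempty)
      exact h3 _ hmem.1 h ⟨hmem.2.1, hmem.2.2⟩

def cons1 (x : Bool) (d : ℕ → Bool) : ℕ → Bool := fun i => if i ≤ 1 then x else d (i - 1)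

lemma goodN_cons_false {w : ℕ} (hw : 2 ≤ w) (d : ℕ → Bool) :
    goodN (w + 1) (cons1 false d) ↔ goodN w d := by
  unfold goodN
  constructor
  · rintro ⟨h1, h2, h3⟩
    refine ⟨?_, ?_, fun n hn hnv hpair => ?_⟩
    · simpa [cons1, show ¬(w ≤ 1) by omega] using h1
    · simpa [cons1, show ¬(w + 1 ≤ 1) by omega] using h2
    · refine h3 (n + 1) (by omega) (by omega) ⟨?_, ?_⟩
      · simpa [cons1, show ¬(n ≤ 1) by omega] using hpair.1
      · simpa [cons1, show ¬(n + 1 ≤ 1) by omega] using hpair.2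
  · rintro ⟨h1, h2, h3⟩
    refine ⟨?_, ?_, fun n hn hnv hpair => ?_⟩
    · simpa [cons1, show ¬(w ≤ 1) by omega] using h1
    · simpa [cons1, show ¬(w + 1 ≤ 1) by omega] using h2
    · rcases eq_or_lt_of_le hn with h | h
      · -- n = 2 : pair is (c 1, c 2), c 1 = false
        have : cons1 false d (n - 1) = false := by
          have : n - 1 = 1 := by omega
          simp [cons1, this]
        rw [hpair.1] at this
        exact absurd this (by simp)
      · -- 3 ≤ n
        refine h3 (n - 1) (by omega) (by omega) ⟨?_, ?_⟩
        · have e := hpair.1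
          rw [show cons1 false d (n - 1) = d (n - 1 - 1) by
            simp [cons1, show ¬(n - 1 ≤ 1) by omega]] at e
          exact e
        · have e := hpair.2
          rw [show cons1 false d n = d (n - 1) by
            simp [cons1, show ¬(n ≤ 1) by omega]] at e
          exact e

lemma goodN_cons_true {w : ℕ} (hw : 2 ≤ w) (d : ℕ → Bool) :
    goodN (w + 1) (cons1 true d) ↔ (d 1 = false ∧ goodN w d) := by
  unfold goodN
  constructor
  · rintro ⟨h1, h2, h3⟩
    have hd1 : d 1 = false := by
      have := h3 2 (by omega) (by omega)
      simp only [cons1] at this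
      simp only [show (2:ℕ) - 1 = 1 by omega, show (1:ℕ) ≤ 1 by omega, if_true,
        show ¬((2:ℕ) ≤ 1) by omega, if_false] at this
      simpa using this
    refine ⟨hd1, ?_, ?_, fun n hn hnv hpair => ?_⟩
    · simpa [cons1, show ¬(w ≤ 1) by omega] using h1
    · simpa [cons1, show ¬(w + 1 ≤ 1) by omega] using h2
    · refine h3 (n + 1) (by omega) (by omega) ⟨?_, ?_⟩
      · simpa [cons1, show ¬(n ≤ 1) by omega] using hpair.1
      · simpa [cons1, show ¬(n + 1 ≤ 1) by omega] using hpair.2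
  · rintro ⟨hd1, h1, h2, h3⟩
    refine ⟨?_, ?_, fun n hn hnv hpair => ?_⟩
    · simpa [cons1, show ¬(w ≤ 1) by omega] using h1
    · simpa [cons1, show ¬(w + 1 ≤ 1) by omega] using h2
    · rcases eq_or_lt_of_le hn with h | h
      · have e := hpair.2
        rw [show cons1 true d n = d (n - 1) by
          simp [cons1, show ¬(n ≤ 1) by omega]] at e
        rw [show n - 1 = 1 by omega] at e
        rw [hd1] at e
        exact absurd e (by simp)
      · refine h3 (n - 1) (by omega) (by omega) ⟨?_, ?_⟩
        · have e := hpair.1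
          rw [show cons1 true d (n - 1) = d (n - 1 - 1) by
            simp [cons1, show ¬(n - 1 ≤ 1) by omega]] at e
          exact e
        · have e := hpair.2
          rw [show cons1 true d n = d (n - 1) by
            simp [cons1, show ¬(n ≤ 1) by omega]] at e
          exact e

end Stmt4Aux
namespace Stmt4Aux

open scoped Classical

def ext1 (v : ℕ) (b : Fin v → Bool) : ℕ → Bool :=
  fun i => if h : 1 ≤ i ∧ i ≤ v then b ⟨i - 1, by omega⟩ else false

lemma ext1_eval {v : ℕ} (b : Fin v → Bool) (i : ℕ) (h1 : 1 ≤ i) (h2 : i ≤ v) :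
    ext1 v b i = b ⟨i - 1, by omega⟩ := dif_pos ⟨h1, h2⟩

lemma ext1_cons {v : ℕ} (x : Bool) (t : Fin v → Bool) :
    ∀ i, 1 ≤ i → i ≤ v + 1 → ext1 (v + 1) (Fin.cons x t) i = cons1 x (ext1 v t) i := by
  intro i h1 h2
  rcases eq_or_lt_of_le h1 with h | h
  · rw [← h]
    simp [ext1, cons1]
  · have h2i : 2 ≤ i := h
    rw [ext1, cons1, dif_pos ⟨h1, h2⟩, if_neg (by omega), ext1,
      dif_pos ⟨by omega, by omega⟩]
    have he : (⟨i - 1, by omega⟩ : Fin (v + 1)) = Fin.succ ⟨i - 2, by omega⟩ := by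
      apply Fin.ext; simp; omega
    rw [he, Fin.cons_succ]
    rfl

noncomputable def W (p : ℝ) {v : ℕ} (b : Fin v → Bool) : ℝ :=
  ∏ i, if b i = true then p else 1 - p

noncomputable def S (p : ℝ) (v : ℕ) : ℝ :=
  ∑ b : Fin v → Bool, if goodN v (ext1 v b) then W p b else 0

noncomputable def T (p : ℝ) (v : ℕ) : ℝ :=
  ∑ t : Fin v → Bool, if (ext1 v t 1 = false ∧ goodN v (ext1 v t)) then W p t else 0

lemma sum_cons (v : ℕ) (F : (Fin (v + 1) → Bool) → ℝ) :
    ∑ b : Fin (v + 1) → Bool, F b = ∑ x : Bool, ∑ t : Fin v → Bool, F (Fin.cons x t) := by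
  rw [← Equiv.sum_comp (Fin.consEquiv fun _ => Bool) F, Fintype.sum_prod_type]
  rfl

lemma W_cons (p : ℝ) {v : ℕ} (x : Bool) (t : Fin v → Bool) :
    W p (Fin.cons x t) = (if x = true then p else 1 - p) * W p t := by
  unfold W
  rw [Fin.prod_univ_succ]
  simp

lemma goodN_ext1_cons {v : ℕ} (hv : 1 ≤ v) (x : Bool) (t : Fin v → Bool) :
    goodN (v + 1) (ext1 (v + 1) (Fin.cons x t)) ↔ goodN (v + 1) (cons1 x (ext1 v t)) :=
  goodN_congr (v := v + 1) (by omega) (ext1_cons x t)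

lemma goodN_two_iff (c : ℕ → Bool) : goodN 2 c ↔ (c 1 = true ∧ c 2 = true) := by
  unfold goodN
  constructor
  · rintro ⟨h1, h2, _⟩; exact ⟨h1, h2⟩
  · rintro ⟨h1, h2⟩; exact ⟨h1, h2, fun n hn hnv => absurd hnv (by omega)⟩

lemma S_two (p : ℝ) : S p 2 = p ^ 2 := by
  unfold S
  rw [sum_cons]
  have hterm : ∀ (x : Bool) (t : Fin 1 → Bool),
      (if goodN 2 (ext1 2 (Fin.cons x t)) then W p (Fin.cons x t) else 0)
        = (if x = true ∧ t 0 = true then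
            (if x = true then p else 1 - p) * (if t 0 = true then p else 1 - p) else 0) := by
    intro x t
    have hiff : goodN 2 (ext1 2 (Fin.cons x t)) ↔ (x = true ∧ t 0 = true) := by
      rw [goodN_two_iff, ext1_eval _ 1 (by omega) (by omega),
        ext1_eval _ 2 (by omega) (by omega)]
      constructor <;> rintro ⟨a, b⟩ <;> exact ⟨a, b⟩
    have hW : W p t = if t 0 = true then p else 1 - p := by
      unfold W; rw [Fin.prod_univ_one]
    rw [W_cons, hW]
    by_cases h : x = true ∧ t 0 = true
    · rw [if_pos (hiff.mpr h), if_pos h]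
    · rw [if_neg (fun hc => h (hiff.mp hc)), if_neg h]
  simp only [hterm]
  have hsum1 : ∀ F : Bool → ℝ, ∑ t : Fin 1 → Bool, F (t 0) = F true + F false := by
    intro F
    rw [← Equiv.sum_comp (Equiv.funUnique (Fin 1) Bool).symm
      (fun t : Fin 1 → Bool => F (t 0)), Fintype.sum_bool]
    rfl
  rw [Fintype.sum_bool, hsum1 (fun y => if true = true ∧ y = true then
      (if true = true then p else 1 - p) * (if y = true then p else 1 - p) else 0),
    hsum1 (fun y => if false = true ∧ y = true then
      (if false = true then p else 1 - p) * (if y = true then p else 1 - p) else 0)]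
  norm_num
  ring

lemma S_split (p : ℝ) {v : ℕ} (hv : 2 ≤ v) :
    S p (v + 1) = (1 - p) * S p v + p * T p v := by
  unfold S T
  rw [sum_cons, Fintype.sum_bool]
  have htrue : ∀ t : Fin v → Bool,
      (if goodN (v + 1) (ext1 (v + 1) (Fin.cons true t)) then W p (Fin.cons true t) else 0)
        = p * (if (ext1 v t 1 = false ∧ goodN v (ext1 v t)) then W p t else 0) := by
    intro t
    have hiff : goodN (v + 1) (ext1 (v + 1) (Fin.cons true t))
        ↔ (ext1 v t 1 = false ∧ goodN v (ext1 v t)) := by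
      rw [goodN_ext1_cons (by omega), goodN_cons_true hv]
    rw [W_cons]
    by_cases h : ext1 v t 1 = false ∧ goodN v (ext1 v t)
    · rw [if_pos (hiff.mpr h), if_pos h]; simp
    · rw [if_neg (fun hc => h (hiff.mp hc)), if_neg h]; simp
  have hfalse : ∀ t : Fin v → Bool,
      (if goodN (v + 1) (ext1 (v + 1) (Fin.cons false t)) then W p (Fin.cons false t) else 0)
        = (1 - p) * (if goodN v (ext1 v t) then W p t else 0) := by
    intro t
    have hiff : goodN (v + 1) (ext1 (v + 1) (Fin.cons false t)) ↔ goodN v (ext1 v t) := by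
      rw [goodN_ext1_cons (by omega), goodN_cons_false hv]
    rw [W_cons]
    by_cases h : goodN v (ext1 v t)
    · rw [if_pos (hiff.mpr h), if_pos h]; simp
    · rw [if_neg (fun hc => h (hiff.mp hc)), if_neg h]; simp
  rw [Finset.sum_congr rfl (fun t _ => htrue t), Finset.sum_congr rfl (fun t _ => hfalse t),
    ← Finset.mul_sum, ← Finset.mul_sum]
  ring

lemma T_two (p : ℝ) : T p 2 = 0 := by
  unfold T
  apply Finset.sum_eq_zero
  intro t _
  rw [if_neg]
  rintro ⟨h1, h2, _⟩
  rw [h1] at h2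
  exact absurd h2 (by simp)

lemma T_succ (p : ℝ) {v : ℕ} (hv : 2 ≤ v) : T p (v + 1) = (1 - p) * S p v := by
  unfold T S
  rw [sum_cons, Fintype.sum_bool]
  have hone : ∀ (x : Bool) (t : Fin v → Bool), ext1 (v + 1) (Fin.cons x t) 1 = x := by
    intro x t
    rw [ext1_cons x t 1 (by omega) (by omega)]
    simp [cons1]
  have htrue : ∀ t : Fin v → Bool,
      (if (ext1 (v + 1) (Fin.cons true t) 1 = false ∧
          goodN (v + 1) (ext1 (v + 1) (Fin.cons true t)))
        then W p (Fin.cons true t) else 0) = 0 := by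
    intro t
    rw [if_neg]
    rintro ⟨h1, -⟩
    rw [hone] at h1
    exact absurd h1 (by simp)
  have hfalse : ∀ t : Fin v → Bool,
      (if (ext1 (v + 1) (Fin.cons false t) 1 = false ∧
          goodN (v + 1) (ext1 (v + 1) (Fin.cons false t)))
        then W p (Fin.cons false t) else 0)
        = (1 - p) * (if goodN v (ext1 v t) then W p t else 0) := by
    intro t
    have hiff : (ext1 (v + 1) (Fin.cons false t) 1 = false ∧
        goodN (v + 1) (ext1 (v + 1) (Fin.cons false t))) ↔ goodN v (ext1 v t) := by
      rw [hone, goodN_ext1_cons (by omega), goodN_cons_false hv]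
      simp
    rw [W_cons]
    by_cases h : goodN v (ext1 v t)
    · rw [if_pos (hiff.mpr h), if_pos h]; simp
    · rw [if_neg (fun hc => h (hiff.mp hc)), if_neg h]; simp
  rw [Finset.sum_congr rfl (fun t _ => htrue t), Finset.sum_congr rfl (fun t _ => hfalse t),
    ← Finset.mul_sum]
  simp

lemma S_three (p : ℝ) : S p 3 = (1 - p) * p ^ 2 := by
  have := S_split p (v := 2) le_rfl
  rw [T_two, S_two] at this
  simpa using this

lemma S_rec (p : ℝ) {v : ℕ} (hv : 2 ≤ v) :
    S p (v + 2) = (1 - p) * S p (v + 1) + p * (1 - p) * S p v := by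
  have h1 := S_split p (v := v + 1) (by omega)
  rw [T_succ p hv] at h1
  rw [show v + 2 = v + 1 + 1 from rfl, h1]
  ring

end Stmt4Aux
namespace Stmt4Aux

open scoped Classical

lemma cyl_measurable (n : ℕ) (c : ℕ → Bool) :
    MeasurableSet {ω : ℕ → Bool | ∀ i, 1 ≤ i → i ≤ n → ω i = c i} := by
  have hset : {ω : ℕ → Bool | ∀ i, 1 ≤ i → i ≤ n → ω i = c i}
      = ⋂ i ∈ Set.Icc 1 n, (fun ω : ℕ → Bool => ω i) ⁻¹' {c i} := by
    ext ω
    simp only [Set.mem_setOf_eq, Set.mem_iInter, Set.mem_Icc, Set.mem_preimage,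
      Set.mem_singleton_iff]
    constructor
    · intro h i hi; exact h i hi.1 hi.2
    · intro h i h1 h2; exact h i ⟨h1, h2⟩
  rw [hset]
  exact MeasurableSet.biInter (Set.to_countable _) fun i _ =>
    (measurable_pi_apply i) (measurableSet_singleton _)

lemma measure_cylinderSum (p : ℝ) (hp0 : 0 ≤ p) (hp1 : p ≤ 1)
    (μ : Measure (ℕ → Bool))
    (hμ : ∀ (n : ℕ) (b : ℕ → Bool),
      μ {ω | ∀ i, 1 ≤ i → i ≤ n → ω i = b i}
        = ENNReal.ofReal (∏ i ∈ Finset.Icc 1 n, if b i = true then p else 1 - p))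
    (n : ℕ) (P : (ℕ → Bool) → Prop)
    (hP : ∀ c c' : ℕ → Bool, (∀ i, 1 ≤ i → i ≤ n → c i = c' i) → (P c ↔ P c')) :
    (μ {ω | P ω}).toReal
      = ∑ b : Fin n → Bool, if P (ext1 n b) then W p b else 0 := by
  have hWnonneg : ∀ b : Fin n → Bool, 0 ≤ W p b := by
    intro b
    apply Finset.prod_nonneg
    intro i _
    split <;> linarith
  have hprod : ∀ b : Fin n → Bool,
      (∏ i ∈ Finset.Icc 1 n, if ext1 n b i = true then p else 1 - p) = W p b := by
    intro b
    rw [show Finset.Icc 1 n = Finset.Ico 1 (n + 1) from (Finset.Ico_add_one_right_eq_Icc 1 n).symm,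
      Finset.prod_Ico_eq_prod_range, Nat.add_sub_cancel]
    have h1 : ∀ i : Fin n, (if b i = true then p else 1 - p)
        = (if ext1 n b (1 + i.val) = true then p else 1 - p) := by
      intro i
      rw [ext1_eval b (1 + i.val) (by omega) (by omega)]
      have he : (⟨1 + i.val - 1, by omega⟩ : Fin n) = i := Fin.ext (by simp)
      rw [he]
    unfold W
    calc ∏ k ∈ Finset.range n, (if ext1 n b (1 + k) = true then p else 1 - p)
        = ∏ i : Fin n, (if ext1 n b (1 + i.val) = true then p else 1 - p) :=
          (Fin.prod_univ_eq_prod_range _ n).symm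
      _ = ∏ i : Fin n, (if b i = true then p else 1 - p) :=
          Finset.prod_congr rfl fun i _ => (h1 i).symm
  have hagree : ∀ ω : ℕ → Bool, ∀ i, 1 ≤ i → i ≤ n →
      ω i = ext1 n (fun j : Fin n => ω (j.val + 1)) i := by
    intro ω i h1 h2
    rw [ext1_eval _ i h1 h2]
    show ω i = ω (i - 1 + 1)
    congr 1
    omega
  have hset : {ω | P ω} = ⋃ b ∈ Finset.univ.filter (fun b : Fin n → Bool => P (ext1 n b)),
      {ω : ℕ → Bool | ∀ i, 1 ≤ i → i ≤ n → ω i = ext1 n b i} := by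
    ext ω
    simp only [Set.mem_setOf_eq, Set.mem_iUnion, Finset.mem_filter, Finset.mem_univ, true_and,
      exists_prop]
    constructor
    · intro hω
      exact ⟨fun j : Fin n => ω (j.val + 1), (hP _ _ (hagree ω)).mp hω, hagree ω⟩
    · rintro ⟨b, hPb, hb⟩
      exact (hP _ _ hb).mpr hPb
  rw [hset, measure_biUnion_finset ?hd ?hm]
  case hd =>
    intro b hb b' hb' hne
    simp only [Function.onFun]
    rw [Set.disjoint_left]
    intro ω hω hω'
    apply hne
    funext j
    have e1 := hω (j.val + 1) (by omega) (by omega)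
    have e2 := hω' (j.val + 1) (by omega) (by omega)
    rw [ext1_eval _ _ (by omega) (by omega)] at e1
    rw [ext1_eval _ _ (by omega) (by omega)] at e2
    have he : (⟨j.val + 1 - 1, by omega⟩ : Fin n) = j := Fin.ext (by simp)
    rw [he] at e1 e2
    rw [← e1, e2]
  case hm => exact fun b _ => cyl_measurable n (ext1 n b)
  rw [Finset.sum_congr rfl (fun b _ => by rw [hμ n (ext1 n b), hprod b] :
    ∀ b ∈ Finset.univ.filter (fun b : Fin n → Bool => P (ext1 n b)),
      μ {ω : ℕ → Bool | ∀ i, 1 ≤ i → i ≤ n → ω i = ext1 n b i}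
        = ENNReal.ofReal (W p b))]
  rw [ENNReal.toReal_sum (fun b _ => ENNReal.ofReal_ne_top)]
  rw [Finset.sum_congr rfl (fun b _ => ENNReal.toReal_ofReal (hWnonneg b))]
  rw [Finset.sum_filter]

end Stmt4Aux
namespace Stmt4Aux

open scoped Classical

lemma measure_goodN (p : ℝ) (hp0 : 0 ≤ p) (hp1 : p ≤ 1)
    (μ : Measure (ℕ → Bool))
    (hμ : ∀ (n : ℕ) (b : ℕ → Bool),
      μ {ω | ∀ i, 1 ≤ i → i ≤ n → ω i = b i}
        = ENNReal.ofReal (∏ i ∈ Finset.Icc 1 n, if b i = true then p else 1 - p))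
    {v : ℕ} (hv : 2 ≤ v) :
    (μ {ω | goodN v ω}).toReal = S p v := by
  rw [measure_cylinderSum p hp0 hp1 μ hμ v (goodN v)
    (fun c c' h => goodN_congr hv h)]
  rfl

end Stmt4Aux

theorem stmt4 (p : ℝ) (hp0 : 0 < p) (hp1 : p < 1)
    (μ : Measure (ℕ → Bool)) [IsProbabilityMeasure μ]
    (hμ : ∀ (n : ℕ) (b : ℕ → Bool),
      μ {ω | ∀ i, 1 ≤ i → i ≤ n → ω i = b i}
        = ENNReal.ofReal (∏ i ∈ Finset.Icc 1 n, if b i = true then p else 1 - p))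
    (R₁ R₂ : ℝ)
    (hR₁ : R₁ = ((1 - p) + Real.sqrt ((1 - p) ^ 2 + 4 * p * (1 - p))) / 2)
    (hR₂ : R₂ = ((1 - p) - Real.sqrt ((1 - p) ^ 2 + 4 * p * (1 - p))) / 2) :
    ∀ v : ℕ, 2 ≤ v →
      (μ {ω | waitingTime 2 ω = v}).toReal
        = p ^ 2 * (R₁ ^ (v - 1) - R₂ ^ (v - 1)) / (R₁ - R₂) := by
  have hq0 : (0:ℝ) < 1 - p := by linarith
  have hD : (0:ℝ) < (1 - p) ^ 2 + 4 * p * (1 - p) := by nlinarith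
  set s : ℝ := Real.sqrt ((1 - p) ^ 2 + 4 * p * (1 - p)) with hs
  have hs0 : 0 < s := Real.sqrt_pos.mpr hD
  have hs2 : s ^ 2 = (1 - p) ^ 2 + 4 * p * (1 - p) := Real.sq_sqrt hD.le
  have hdiff : R₁ - R₂ = s := by rw [hR₁, hR₂]; ring
  have hRne : R₁ - R₂ ≠ 0 := by rw [hdiff]; exact ne_of_gt hs0
  have e1 : R₁ ^ 2 = (1 - p) * R₁ + p * (1 - p) := by rw [hR₁]; nlinarith [hs2]
  have e2 : R₂ ^ 2 = (1 - p) * R₂ + p * (1 - p) := by rw [hR₂]; nlinarith [hs2]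
  have key : ∀ m : ℕ, R₁ ^ (m + 2) - R₂ ^ (m + 2)
      = (1 - p) * (R₁ ^ (m + 1) - R₂ ^ (m + 1)) + p * (1 - p) * (R₁ ^ m - R₂ ^ m) := by
    intro m
    have a1 : R₁ ^ (m + 2) = R₁ ^ m * R₁ ^ 2 := by ring
    have a2 : R₂ ^ (m + 2) = R₂ ^ m * R₂ ^ 2 := by ring
    rw [a1, a2, e1, e2]; ring
  have main : ∀ v : ℕ, 2 ≤ v →
      Stmt4Aux.S p v = p ^ 2 * (R₁ ^ (v - 1) - R₂ ^ (v - 1)) / (R₁ - R₂) := by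
    intro v
    induction v using Nat.strong_induction_on with
    | _ v ih =>
      intro hv2
      rcases eq_or_ne v 2 with rfl | hne2
      · rw [Stmt4Aux.S_two, show (2:ℕ) - 1 = 1 from rfl, pow_one, pow_one]
        field_simp
      · rcases eq_or_ne v 3 with rfl | hne3
        · rw [Stmt4Aux.S_three, show (3:ℕ) - 1 = 2 from rfl]
          have h32 : R₁ ^ 2 - R₂ ^ 2 = (1 - p) * (R₁ - R₂) := by rw [e1, e2]; ring
          rw [h32]
          field_simp
        · obtain ⟨n, rfl⟩ : ∃ n, v = n + 4 := ⟨v - 4, by omega⟩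
          have hrec := Stmt4Aux.S_rec p (v := n + 2) (by omega)
          rw [show n + 2 + 2 = n + 4 from rfl, show n + 2 + 1 = n + 3 from rfl] at hrec
          rw [hrec, ih (n + 3) (by omega) (by omega), ih (n + 2) (by omega) (by omega)]
          rw [show n + 4 - 1 = n + 3 by omega, show n + 3 - 1 = n + 2 by omega,
            show n + 2 - 1 = n + 1 by omega]
          have hk : R₁ ^ (n + 3) - R₂ ^ (n + 3)
              = (1 - p) * (R₁ ^ (n + 2) - R₂ ^ (n + 2))
                + p * (1 - p) * (R₁ ^ (n + 1) - R₂ ^ (n + 1)) := by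
            have := key (n + 1)
            rwa [show n + 1 + 2 = n + 3 from rfl, show n + 1 + 1 = n + 2 from rfl] at this
          rw [hk]
          field_simp
  intro v hv
  have hEv : {ω | waitingTime 2 ω = v} = {ω | Stmt4Aux.goodN v ω} :=
    Set.ext fun ω => Stmt4Aux.waiting_eq_iff hv ω
  rw [hEv, Stmt4Aux.measure_goodN p hp0.le hp1.le μ hμ hv]
  exact main v hv
end

section
/- The probability generating function of V(2) equals s²p²/(1 − qs − qps²); precisely, in the ring of formal power series ℝ⟦X⟧, (1 − q·X − q·p·X²)·∑_{v≥0} P(V(2) = v)·X^v = p²·X². -/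
open MeasureTheory Finset PowerSeries

/-! First-step analysis. For `m ∉ {1, 2}` the event `V = m` splits according to whether the
trials start with `0` or with `1 0` into `V' = m - 1` resp. `V'' = m - 2`, where `V'`, `V''` are
the waiting times of the trials after the first resp. second one (a start `1 1` gives `V = 2`).
The trials after the first form again an i.i.d. Bernoulli(p) sequence, independent of the first
one, so `P(V = m) = q P(V = m - 1) + q p P(V = m - 2)`, which is the coefficient identity. This
independence is checked on cylinder sets, which form a π-system generating the product
σ-algebra. Since `V = sInf ∅ = 0` when no run ever occurs, the relation also holds at `m = 0`,
where it yields `p² P(V = 0) = 0`. -/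

lemma Nat.sInf_setOf_eq_iff {P : ℕ → Prop} {m : ℕ} :
    sInf {n | P n} = m ↔ (P m ∨ m = 0 ∧ ∀ n, ¬P n) ∧ ∀ k < m, ¬P k := by
  constructor
  · rintro rfl
    rcases Set.eq_empty_or_nonempty {n | P n} with h | h
    · simp_all [Set.eq_empty_iff_forall_notMem]
    · exact ⟨Or.inl (Nat.sInf_mem h), fun k hk => Nat.notMem_of_lt_sInf hk⟩
  · rintro ⟨hm | ⟨rfl, hP⟩, hlt⟩
    · exact le_antisymm (Nat.sInf_le hm) (le_of_not_gt fun h => hlt _ h (Nat.sInf_mem ⟨m, hm⟩))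
    · simp [hP]

lemma measurableSet_sInf_setOf_eq {α : Type*} [MeasurableSpace α] {P : α → ℕ → Prop}
    (hP : ∀ n, MeasurableSet {a | P a n}) (m : ℕ) :
    MeasurableSet {a | sInf {n | P a n} = m} := by
  simp only [measurableSet_setOfPred, Nat.sInf_setOf_eq_iff] at hP ⊢
  have hm : Measurable fun _ : α => m = 0 := measurable_const
  exact ((hP m).or (hm.and (Measurable.forall fun n => (hP n).not))).and
    (Measurable.forall fun k => measurable_const.imp (hP k).not)

-- `m = 1` has to be excluded because of the junk value `sInf ∅ = 0`.
lemma Nat.sInf_setOf_eq_iff_of_succ {P Q : ℕ → Prop} (hP0 : ¬P 0) (hQ0 : ¬Q 0)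
    (hPQ : ∀ n, P (n + 1) ↔ Q n) {m : ℕ} (hm : m ≠ 1) :
    sInf {n | P n} = m ↔ sInf {n | Q n} = m - 1 := by
  rcases Set.eq_empty_or_nonempty {n | Q n} with hQ | ⟨k, hk⟩
  · have hP : {n | P n} = ∅ := by
      ext (_ | n) <;> simp_all [Set.eq_empty_iff_forall_notMem]
    rw [hP, hQ, Nat.sInf_empty]
    omega
  · have hP1 : 1 ≤ sInf {n | P n} :=
      Nat.one_le_iff_ne_zero.2 fun h => hP0 (h ▸ Nat.sInf_mem ⟨k + 1, (hPQ k).2 hk⟩)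
    have hQ1 : 1 ≤ sInf {n | Q n} :=
      Nat.one_le_iff_ne_zero.2 fun h => hQ0 (h ▸ Nat.sInf_mem ⟨k, hk⟩)
    have := Nat.sInf_add hP1
    simp only [hPQ] at this
    omega

namespace PiNat

lemma isPiSystem_cylinders {E : ℕ → Type*} :
    IsPiSystem {s : Set (∀ n, E n) | ∃ x n, s = cylinder x n} := by
  rintro _ ⟨x, n, rfl⟩ _ ⟨y, m, rfl⟩ ⟨z, hzx, hzy⟩
  refine ⟨z, max n m, ?_⟩
  rw [← mem_cylinder_iff_eq.1 hzx, ← mem_cylinder_iff_eq.1 hzy]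
  ext w
  simp only [Set.mem_inter_iff, mem_cylinder_iff]
  exact ⟨fun ⟨h1, h2⟩ i hi => (max_cases n m).elim (fun h => h1 i (by omega))
    (fun h => h2 i (by omega)),
    fun h => ⟨fun i hi => h i (by omega), fun i hi => h i (by omega)⟩⟩

lemma measurableSpace_eq_generateFrom_cylinders {α : Type*} [TopologicalSpace α]
    [DiscreteTopology α] [Countable α] [MeasurableSpace α] [BorelSpace α] :
    (inferInstance : MeasurableSpace (ℕ → α))
      = MeasurableSpace.generateFrom {s | ∃ x n, s = cylinder x n} := by
  rw [BorelSpace.measurable_eq (α := ℕ → α)]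
  exact borel_eq_generateFrom_of_subbasis
    (isTopologicalBasis_cylinders (E := fun _ => α)).eq_generateFrom

lemma measurableSet_cylinder {E : ℕ → Type*} [∀ n, MeasurableSpace (E n)]
    [∀ n, MeasurableSingletonClass (E n)] (x : ∀ n, E n) (n : ℕ) :
    MeasurableSet (cylinder x n) := by
  rw [cylinder_eq_pi]
  exact .pi (Finset.range n).countable_toSet fun i _ => measurableSet_singleton (x i)

end PiNat

lemma PowerSeries.mul_eq_of_linearRecurrence {R : Type*} [CommRing R] {a b c : R} {f : ℕ → R}
    (h0 : f 0 = 0) (h1 : f 1 = 0) (h2 : f 2 = c)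
    (hrec : ∀ n, f (n + 3) = a * f (n + 2) + b * f (n + 1)) :
    (1 - C a * X - C b * X ^ 2) * mk f = C c * X ^ 2 := by
  ext (_ | _ | _ | n) <;>
    simp [sub_mul, mul_assoc, coeff_X_pow_mul', coeff_X_pow, coeff_succ_X_mul, h0, h1, h2, hrec]

namespace SuccessRun

def trialProb (p : ℝ) (b : Bool) : ℝ := if b then p else 1 - p

def tail {α : Type*} (x : ℕ → α) : ℕ → α := fun i => x (i + 1)

def IsBernoulliSeq (p : ℝ) (ν : Measure (ℕ → Bool)) : Prop :=
  ∀ x n, ν (PiNat.cylinder x n) = ENNReal.ofReal (∏ i ∈ range n, trialProb p (x i))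

lemma measurable_tail {α : Type*} [MeasurableSpace α] :
    Measurable (tail : (ℕ → α) → ℕ → α) :=
  measurable_pi_lambda _ fun i => measurable_pi_apply (i + 1)

lemma trialProb_nonneg {p : ℝ} (hp0 : 0 ≤ p) (hp1 : p ≤ 1) (b : Bool) :
    0 ≤ trialProb p b := by
  cases b <;> simp [trialProb] <;> linarith

lemma setOf_head_inter_preimage_tail_cylinder {α : Type*} (a : α) (y : ℕ → α) (n : ℕ) :
    {x | x 0 = a} ∩ tail ⁻¹' PiNat.cylinder y n
      = PiNat.cylinder (fun | 0 => a | i + 1 => y i) (n + 1) := by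
  ext x
  simp only [Set.mem_inter_iff, Set.mem_ofPred_eq, Set.mem_preimage, PiNat.mem_cylinder_iff, tail]
  constructor
  · rintro ⟨h0, h⟩ (_ | i) hi
    exacts [h0, h i (by omega)]
  · exact fun h => ⟨h 0 (by omega), fun i hi => h (i + 1) (by omega)⟩

lemma IsBernoulliSeq.measure_inter_preimage_tail {p : ℝ} (hp0 : 0 ≤ p) (hp1 : p ≤ 1)
    {ν : Measure (ℕ → Bool)} [IsFiniteMeasure ν] (hν : IsBernoulliSeq p ν) (a : Bool)
    {B : Set (ℕ → Bool)} (hB : MeasurableSet B) :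
    ν ({x | x 0 = a} ∩ tail ⁻¹' B) = ENNReal.ofReal (trialProb p a) * ν B := by
  have hmap {s : Set (ℕ → Bool)} (hs : MeasurableSet s) :
      (ν.restrict {x | x 0 = a}).map tail s = ν ({x | x 0 = a} ∩ tail ⁻¹' s) := by
    rw [Measure.map_apply measurable_tail hs, Measure.restrict_apply (measurable_tail hs),
      Set.inter_comm]
  have hcyl (y : ℕ → Bool) (n : ℕ) : ν ({x | x 0 = a} ∩ tail ⁻¹' PiNat.cylinder y n)
      = ENNReal.ofReal (trialProb p a) * ν (PiNat.cylinder y n) := by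
    rw [setOf_head_inter_preimage_tail_cylinder, hν, hν, prod_range_succ', mul_comm,
      ENNReal.ofReal_mul (trialProb_nonneg hp0 hp1 a)]
  have htail : (ν.restrict {x | x 0 = a}).map tail = ENNReal.ofReal (trialProb p a) • ν := by
    refine ext_of_generate_finite _ PiNat.measurableSpace_eq_generateFrom_cylinders
      PiNat.isPiSystem_cylinders ?_ ?_
    · rintro _ ⟨y, n, rfl⟩
      rw [hmap (PiNat.measurableSet_cylinder y n), hcyl, Measure.smul_apply, smul_eq_mul]
    · simpa [hmap, PiNat.cylinder_zero] using hcyl (fun _ => a) 0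
  rw [← hmap hB, htail, Measure.smul_apply, smul_eq_mul]

-- Trial `j` is `x (j - 1)`: unlike `ω` in `waitingTime`, `x` is indexed from `0`.
def CompletesRun (x : ℕ → Bool) (n : ℕ) : Prop :=
  2 ≤ n ∧ x (n - 2) = true ∧ x (n - 1) = true

-- `runTime x = sInf ∅ = 0` when no run of two successes ever occurs.
noncomputable def runTime (x : ℕ → Bool) : ℕ := sInf {n | CompletesRun x n}

lemma waitingTime_two_eq_runTime_tail (ω : ℕ → Bool) :
    waitingTime 2 ω = runTime (tail ω) := by
  unfold waitingTime runTime CompletesRun tail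
  congr 1
  ext n
  simp only [Set.mem_ofPred_eq, Finset.mem_Icc, and_congr_right_iff]
  intro hn
  rw [show n - 2 + 1 = n - 1 by omega, show n - 1 + 1 = n by omega]
  constructor
  · exact fun h => ⟨h _ (by omega), h _ (by omega)⟩
  · rintro ⟨h1, h2⟩ i hi
    obtain rfl | rfl : i = n - 1 ∨ i = n := by omega
    exacts [h1, h2]

lemma measurableSet_runTime_eq (m : ℕ) : MeasurableSet {x | runTime x = m} := by
  refine measurableSet_sInf_setOf_eq (fun n => ?_) m
  simp only [CompletesRun, Set.ofPred_and]
  exact (MeasurableSet.const _).inter ((measurableSet_eq_fun (measurable_pi_apply _)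
    measurable_const).inter (measurableSet_eq_fun (measurable_pi_apply _) measurable_const))

lemma runTime_ne_one (x : ℕ → Bool) : runTime x ≠ 1 := by
  intro h
  have := (Nat.sInf_setOf_eq_iff.1 h).1
  simp only [CompletesRun, one_ne_zero, false_and, or_false] at this
  omega

lemma runTime_eq_two_iff {x : ℕ → Bool} :
    runTime x = 2 ↔ x ∈ PiNat.cylinder (fun _ => true) 2 := by
  rw [runTime, Nat.sInf_setOf_eq_iff, PiNat.mem_cylinder_iff]
  simp only [CompletesRun, Nat.lt_succ_iff]
  constructor
  · rintro ⟨h | h, -⟩ i hi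
    · interval_cases i <;> simp_all
    · simp at h
  · intro h
    exact ⟨Or.inl ⟨le_rfl, h 0 (by omega), h 1 (by omega)⟩, fun k hk hrun => by
      have := hrun.1; omega⟩

lemma runTime_eq_iff_runTime_tail {x : ℕ → Bool} (hx : ¬(x 0 = true ∧ x 1 = true)) {m : ℕ}
    (hm : m ≠ 1) : runTime x = m ↔ runTime (tail x) = m - 1 := by
  refine Nat.sInf_setOf_eq_iff_of_succ (by simp [CompletesRun]) (by simp [CompletesRun])
    (fun n => ?_) hm
  simp only [CompletesRun, tail]
  rcases n with _ | _ | n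
  · simp
  · simpa using hx
  · simp only [show n + 2 + 1 - 2 = n + 1 by omega, show n + 2 + 1 - 1 = n + 2 by omega,
      show n + 2 - 2 + 1 = n + 1 by omega, show n + 2 - 1 + 1 = n + 2 by omega]
    simp

lemma setOf_runTime_eq {m : ℕ} (hm1 : m ≠ 1) (hm2 : m ≠ 2) :
    {x | runTime x = m}
      = {x | x 0 = false} ∩ tail ⁻¹' {x | runTime x = m - 1}
        ∪ {x | x 0 = true}
          ∩ tail ⁻¹' ({x | x 0 = false} ∩ tail ⁻¹' {x | runTime x = m - 2}) := by
  ext x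
  simp only [Set.mem_union, Set.mem_inter_iff, Set.mem_preimage, Set.mem_ofPred_eq]
  have h1 : tail x 0 = x 1 := rfl
  rcases h0 : x 0 with _ | _
  · simp [runTime_eq_iff_runTime_tail (x := x) (by simp [h0]) hm1]
  · rcases h1' : x 1 with _ | _
    · rw [runTime_eq_iff_runTime_tail (by simp [h1']) hm1,
        runTime_eq_iff_runTime_tail (x := tail x) (by simp [h1, h1']) (by omega)]
      simp [h1, h1', Nat.sub_sub]
    · have : runTime x = 2 := runTime_eq_two_iff.2 fun i hi => by interval_cases i <;> assumption
      simp [h1, h1', this, Ne.symm hm2]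

section
variable {p : ℝ} {ν : Measure (ℕ → Bool)}

lemma IsBernoulliSeq.measure_runTime_eq [IsFiniteMeasure ν] (hp0 : 0 ≤ p) (hp1 : p ≤ 1)
    (hν : IsBernoulliSeq p ν) {m : ℕ} (hm1 : m ≠ 1) (hm2 : m ≠ 2) :
    ν {x | runTime x = m}
      = ENNReal.ofReal (1 - p) * ν {x | runTime x = m - 1}
        + ENNReal.ofReal p * (ENNReal.ofReal (1 - p) * ν {x | runTime x = m - 2}) := by
  have hhead (a : Bool) : MeasurableSet {x : ℕ → Bool | x 0 = a} :=
    measurableSet_eq_fun (measurable_pi_apply 0) measurable_const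
  have hB₁ := measurableSet_runTime_eq (m - 1)
  have hB₂ := (hhead false).inter (measurable_tail (measurableSet_runTime_eq (m - 2)))
  rw [setOf_runTime_eq hm1 hm2, measure_union ?_ ((hhead true).inter (measurable_tail hB₂)),
    hν.measure_inter_preimage_tail hp0 hp1 _ hB₁,
    hν.measure_inter_preimage_tail hp0 hp1 _ hB₂,
    hν.measure_inter_preimage_tail hp0 hp1 _ (measurableSet_runTime_eq _)]
  · simp [trialProb]
  · exact Set.disjoint_left.2 fun x h h' => by simp_all

lemma IsBernoulliSeq.measure_runTime_eq_two (hν : IsBernoulliSeq p ν) :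
    ν {x | runTime x = 2} = ENNReal.ofReal (p ^ 2) := by
  have : {x | runTime x = 2} = PiNat.cylinder (fun _ => true) 2 :=
    Set.ext fun _ => runTime_eq_two_iff
  rw [this, hν]
  simp [trialProb, sq]

end

lemma isBernoulliSeq_map_tail {p : ℝ} {μ : Measure (ℕ → Bool)}
    (hμ : ∀ (n : ℕ) (b : ℕ → Bool),
      μ {ω | ∀ i, 1 ≤ i → i ≤ n → ω i = b i}
        = ENNReal.ofReal (∏ i ∈ Finset.Icc 1 n, if b i = true then p else 1 - p)) :
    IsBernoulliSeq p (μ.map tail) := by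
  intro x n
  have hpre :
      tail ⁻¹' PiNat.cylinder x n = {ω | ∀ i, 1 ≤ i → i ≤ n → ω i = x (i - 1)} := by
    ext ω
    simp only [Set.mem_preimage, PiNat.mem_cylinder_iff, tail, Set.mem_ofPred_eq]
    constructor
    · intro h i hi1 hin
      simpa [show i - 1 + 1 = i by omega] using h (i - 1) (by omega)
    · exact fun h i hi => h (i + 1) (by omega) (by omega)
  rw [Measure.map_apply measurable_tail (PiNat.measurableSet_cylinder x n), hpre, hμ,
    ← Finset.Ico_add_one_right_eq_Icc, Finset.prod_Ico_eq_prod_range]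
  simp [trialProb, add_comm 1]

end SuccessRun

theorem stmt5 (p : ℝ) (hp0 : 0 < p) (hp1 : p < 1)
    (μ : Measure (ℕ → Bool)) [IsProbabilityMeasure μ]
    (hμ : ∀ (n : ℕ) (b : ℕ → Bool),
      μ {ω | ∀ i, 1 ≤ i → i ≤ n → ω i = b i}
        = ENNReal.ofReal (∏ i ∈ Finset.Icc 1 n, if b i = true then p else 1 - p)) :
    (1 - PowerSeries.C (R := ℝ) (1 - p) * PowerSeries.X
        - PowerSeries.C (R := ℝ) ((1 - p) * p) * PowerSeries.X ^ 2) *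
      PowerSeries.mk (fun v => (μ {ω | waitingTime 2 ω = v}).toReal)
    = PowerSeries.C (R := ℝ) (p ^ 2) * PowerSeries.X ^ 2 := by
  set ν := μ.map SuccessRun.tail
  have hν : SuccessRun.IsBernoulliSeq p ν := SuccessRun.isBernoulliSeq_map_tail hμ
  set f : ℕ → ℝ := fun v => (ν {x | SuccessRun.runTime x = v}).toReal
  have hf : (fun v => (μ {ω | waitingTime 2 ω = v}).toReal) = f := funext fun v => by
    simp only [f, ν, Measure.map_apply SuccessRun.measurable_tail
      (SuccessRun.measurableSet_runTime_eq v), Set.preimage_ofPred_eq,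
      SuccessRun.waitingTime_two_eq_runTime_tail]
  have hrec {m : ℕ} (hm1 : m ≠ 1) (hm2 : m ≠ 2) :
      f m = (1 - p) * f (m - 1) + (1 - p) * p * f (m - 2) := by
    simp only [f]
    rw [hν.measure_runTime_eq hp0.le hp1.le hm1 hm2, ENNReal.toReal_add (by finiteness)
      (by finiteness), ENNReal.toReal_mul, ENNReal.toReal_mul, ENNReal.toReal_mul,
      ENNReal.toReal_ofReal hp0.le, ENNReal.toReal_ofReal (sub_nonneg.2 hp1.le)]
    ring
  have hf1 : f 1 = 0 := by simp [f, SuccessRun.runTime_ne_one]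
  have hf2 : f 2 = p ^ 2 := by simp [f, hν.measure_runTime_eq_two, sq_nonneg]
  have hf0 : f 0 = 0 := by
    have h := hrec (m := 0) (by omega) (by omega)
    have : p ^ 2 * f 0 = 0 := by simp only [Nat.zero_sub] at h; linarith
    exact (mul_eq_zero.1 this).resolve_left (by positivity)
  rw [hf]
  exact PowerSeries.mul_eq_of_linearRecurrence hf0 hf1 hf2 fun n => hrec (by omega) (by omega)
end

section
/- Fix an integer k ≥ 1. The probability mass function of V(k) satisfies P(V(k) = v) = P(V(k) = v−1) − p^k·q·P(V(k) = v−k−1) for every integer v > k+1, together with the initial conditions P(V(k) = v) = 0 for 0 ≤ v < k, P(V(k) = k) = p^k, and P(V(k) = k+1) = q·p^k. -/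
open MeasureTheory Finset

/-!
Write `R m` for the event that no run of `k` successes is complete by trial `m`; it depends only
on trials `1, …, m`. The first run ends at trial `m + k + 1` exactly when `R m` holds, trial
`m + 1` fails and the next `k` trials succeed, so by the product structure of `μ` on cylinders
`P(V = m + k + 1) = q p^k P(R m)`. Since `R m` is the disjoint union of `R (m + 1)` and
`{V = m + 1}`, two consecutive instances of this identity give the recursion.

When no run ever occurs, `waitingTime` takes the junk value `0`. That event lies in every `R m`,
and `P(R m) = P(V = m + k + 1) / (q p^k) → 0` because the events `{V = n}` are disjoint.
-/

open Filter Topology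
open scoped ENNReal

def firstTrials (m : ℕ) (ω : ℕ → Bool) : Fin m → Bool := fun j => ω (j + 1)

lemma firstTrials_succ (m : ℕ) (ω : ℕ → Bool) :
    firstTrials (m + 1) ω = Fin.snoc (firstTrials m ω) (ω (m + 1)) := by
  funext j
  refine Fin.lastCases ?_ (fun _ => ?_) j <;> simp [firstTrials]

lemma measurable_firstTrials (m : ℕ) : Measurable (firstTrials m) :=
  measurable_pi_lambda _ fun _ => measurable_pi_apply _

def DependsOnFirst (m : ℕ) (A : Set (ℕ → Bool)) : Prop :=
  ∀ ω ω', (∀ i, 1 ≤ i → i ≤ m → ω i = ω' i) → ω ∈ A → ω' ∈ A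

namespace DependsOnFirst

variable {m : ℕ} {A : Set (ℕ → Bool)}

lemma exists_eq_preimage (hA : DependsOnFirst m A) :
    ∃ E : Finset (Fin m → Bool), A = firstTrials m ⁻¹' E := by
  classical
  refine ⟨univ.filter (· ∈ firstTrials m '' A), Set.ext fun ω => ?_⟩
  simp only [Set.mem_preimage, coe_filter, mem_univ, true_and, Set.mem_ofPred_eq]
  refine ⟨fun hω => ⟨ω, hω, rfl⟩,
    fun ⟨ω', hω', h⟩ => hA ω' ω (fun i hi1 him => ?_) hω'⟩
  have := congrFun h ⟨i - 1, by omega⟩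
  simp only [firstTrials] at this
  rwa [Nat.sub_add_cancel hi1] at this

lemma measurableSet (hA : DependsOnFirst m A) : MeasurableSet A := by
  obtain ⟨E, rfl⟩ := hA.exists_eq_preimage
  exact measurable_firstTrials m (E : Set (Fin m → Bool)).toFinite.measurableSet

lemma inter_eval_succ (hA : DependsOnFirst m A) (b : Bool) :
    DependsOnFirst (m + 1) (A ∩ {ω | ω (m + 1) = b}) :=
  fun ω ω' h hω => ⟨hA ω ω' (fun i hi1 him => h i hi1 (by omega)) hω.1,
    (h (m + 1) (by omega) le_rfl).symm.trans hω.2⟩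

lemma inter_forall_Ioc (hA : DependsOnFirst m A) (j : ℕ) (b : Bool) :
    DependsOnFirst (m + j) (A ∩ {ω | ∀ i ∈ Ioc m (m + j), ω i = b}) := by
  refine fun ω ω' h hω =>
    ⟨hA ω ω' (fun i hi1 him => h i hi1 (by omega)) hω.1, fun i hi => ?_⟩
  have hi' := mem_Ioc.1 hi
  exact (h i (by omega) hi'.2).symm.trans (hω.2 i hi)

end DependsOnFirst

def HasProductCylinders (μ : Measure (ℕ → Bool)) (w : Bool → ℝ≥0∞) : Prop :=
  ∀ m (c : Fin m → Bool), μ (firstTrials m ⁻¹' {c}) = ∏ j, w (c j)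

lemma hasProductCylinders_of_measure_cylinder {p : ℝ} (hp0 : 0 ≤ p) (hp1 : p ≤ 1)
    {μ : Measure (ℕ → Bool)}
    (hμ : ∀ (n : ℕ) (b : ℕ → Bool),
      μ {ω | ∀ i, 1 ≤ i → i ≤ n → ω i = b i}
        = ENNReal.ofReal (∏ i ∈ Finset.Icc 1 n, if b i = true then p else 1 - p)) :
    HasProductCylinders μ fun b => ENNReal.ofReal (if b then p else 1 - p) := by
  intro m c
  set b : ℕ → Bool := fun i => if h : i - 1 < m then c ⟨i - 1, h⟩ else false
  have hb : ∀ j : Fin m, b (j + 1) = c j := fun j => by simp [b]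
  have hset : firstTrials m ⁻¹' {c} = {ω | ∀ i, 1 ≤ i → i ≤ m → ω i = b i} := by
    ext ω
    simp only [Set.mem_preimage, Set.mem_singleton_iff, funext_iff, firstTrials, ← hb,
      Set.mem_ofPred_eq]
    refine ⟨fun h i hi1 him => ?_, fun h j => h _ (by omega) j.2⟩
    simpa only [Nat.sub_add_cancel hi1] using h ⟨i - 1, by omega⟩
  have hprod : ∏ i ∈ Icc 1 m, (if b i then p else 1 - p) = ∏ j, if c j then p else 1 - p := by
    simp only [← hb]
    rw [Fin.prod_univ_eq_prod_range (fun j => if b (j + 1) then p else 1 - p), range_eq_Ico,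
      prod_Ico_add' (fun i => if b i then p else 1 - p), zero_add, Ico_add_one_right_eq_Icc]
  rw [hset, hμ, hprod, ENNReal.ofReal_prod_of_nonneg fun j _ => by split <;> linarith]

namespace HasProductCylinders

variable {μ : Measure (ℕ → Bool)} {w : Bool → ℝ≥0∞} {m : ℕ} {A : Set (ℕ → Bool)}

lemma measure_firstTrials_preimage (hμ : HasProductCylinders μ w) (E : Finset (Fin m → Bool)) :
    μ (firstTrials m ⁻¹' E) = ∑ c ∈ E, ∏ j, w (c j) := by
  rw [← sum_measure_preimage_singleton E
    fun c _ => measurable_firstTrials m (measurableSet_singleton c)]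
  exact sum_congr rfl fun c _ => hμ m c

lemma measure_inter_eval_succ (hμ : HasProductCylinders μ w) (hA : DependsOnFirst m A)
    (b : Bool) :
    μ (A ∩ {ω | ω (m + 1) = b}) = μ A * w b := by
  obtain ⟨E, rfl⟩ := hA.exists_eq_preimage
  have hset : firstTrials m ⁻¹' E ∩ {ω | ω (m + 1) = b}
      = firstTrials (m + 1) ⁻¹' ↑(E.image fun c => Fin.snoc (α := fun _ => Bool) c b) := by
    ext ω
    simp [firstTrials_succ, Fin.snoc_inj, eq_comm]
  rw [hset, hμ.measure_firstTrials_preimage, hμ.measure_firstTrials_preimage,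
    sum_image fun c _ c' _ h => (Fin.snoc_inj.1 h).1, sum_mul]
  refine sum_congr rfl fun c _ => ?_
  rw [Fin.prod_univ_castSucc]
  simp only [Fin.snoc_castSucc, Fin.snoc_last]

lemma measure_inter_forall_Ioc (hμ : HasProductCylinders μ w) (hA : DependsOnFirst m A)
    (b : Bool) (j : ℕ) :
    μ (A ∩ {ω | ∀ i ∈ Ioc m (m + j), ω i = b}) = μ A * w b ^ j := by
  induction j with
  | zero => simp
  | succ j ih =>
    have hset : A ∩ {ω | ∀ i ∈ Ioc m (m + (j + 1)), ω i = b}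
        = (A ∩ {ω | ∀ i ∈ Ioc m (m + j), ω i = b}) ∩ {ω | ω (m + j + 1) = b} := by
      ext ω
      simp only [Set.mem_inter_iff, Set.mem_ofPred_eq, mem_Ioc, and_assoc, and_imp]
      refine and_congr_right fun _ => ⟨fun h => ⟨fun i hi1 hi2 => h i hi1 (by omega),
        h _ (by omega) (by omega)⟩, fun ⟨h, hlast⟩ i hi1 hi2 => ?_⟩
      rcases Nat.lt_or_ge i (m + j + 1) with hi | hi
      · exact h i hi1 (by omega)
      · rwa [show i = m + j + 1 by omega]
    rw [hset, hμ.measure_inter_eval_succ (hA.inter_forall_Ioc j b), ih, pow_succ, mul_assoc]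

end HasProductCylinders

def runEndsAt (k : ℕ) (ω : ℕ → Bool) (n : ℕ) : Prop :=
  k ≤ n ∧ ∀ i ∈ Icc (n - k + 1) n, ω i = true

def noRunUpTo (k m : ℕ) : Set (ℕ → Bool) :=
  {ω | ∀ n ≤ m, ¬ runEndsAt k ω n}

section WaitingTime

variable {k : ℕ}

lemma waitingTime_eq_succ_iff {ω : ℕ → Bool} {m : ℕ} :
    waitingTime k ω = m + 1 ↔ ω ∈ noRunUpTo k m ∧ runEndsAt k ω (m + 1) := by
  change sInf {n | runEndsAt k ω n} = m + 1 ↔ _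
  constructor
  · intro h
    have hne : {n | runEndsAt k ω n}.Nonempty := by
      by_contra hemp
      rw [Set.not_nonempty_iff_eq_empty.1 hemp, Nat.sInf_empty] at h
      omega
    exact ⟨fun n hn hrun => absurd (h ▸ Nat.sInf_le hrun) (by omega), h ▸ Nat.sInf_mem hne⟩
  · rintro ⟨hno, hrun⟩
    exact IsLeast.csInf_eq ⟨hrun, fun n hn => not_lt.1 fun hlt => hno n (by omega) hn⟩

lemma setOf_waitingTime_eq_succ (m : ℕ) :
    {ω | waitingTime k ω = m + 1} = noRunUpTo k m ∩ {ω | runEndsAt k ω (m + 1)} :=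
  Set.ext fun _ => waitingTime_eq_succ_iff

lemma setOf_waitingTime_eq_succ_of_lt {m : ℕ} (hm : m + 1 < k) :
    {ω | waitingTime k ω = m + 1} = ∅ := by
  rw [setOf_waitingTime_eq_succ]
  exact Set.eq_empty_of_forall_notMem fun ω hω => by have := hω.2.1; omega

lemma noRunUpTo_zero (hk : 1 ≤ k) : noRunUpTo k 0 = Set.univ :=
  Set.eq_univ_of_forall fun _ n hn hrun => by have := hrun.1; omega

lemma noRunUpTo_succ (m : ℕ) :
    noRunUpTo k (m + 1) = noRunUpTo k m \ {ω | runEndsAt k ω (m + 1)} := by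
  ext ω
  simp only [noRunUpTo, Set.mem_sdiff, Set.mem_ofPred_eq]
  refine ⟨fun h => ⟨fun n hn => h n (by omega), h _ le_rfl⟩, fun ⟨h, hlast⟩ n hn => ?_⟩
  rcases Nat.lt_or_ge n (m + 1) with hn' | hn'
  · exact h n (by omega)
  · rwa [show n = m + 1 by omega]

lemma setOf_waitingTime_eq_zero_subset (hk : 1 ≤ k) (m : ℕ) :
    {ω | waitingTime k ω = 0} ⊆ noRunUpTo k m := by
  intro ω h n _ hrun
  rcases Nat.sInf_eq_zero.1 h with h0 | hemp
  · have := h0.1; omega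
  · exact hemp.subset hrun

lemma dependsOnFirst_runEndsAt (n : ℕ) : DependsOnFirst n {ω | runEndsAt k ω n} := by
  refine fun ω ω' h ⟨hkn, hrun⟩ => ⟨hkn, fun i hi => ?_⟩
  have hi' := mem_Icc.1 hi
  exact (h i (by omega) hi'.2).symm.trans (hrun i hi)

lemma dependsOnFirst_noRunUpTo (m : ℕ) : DependsOnFirst m (noRunUpTo k m) :=
  fun ω ω' h hω n hn hrun => hω n hn
    (dependsOnFirst_runEndsAt n ω' ω (fun i hi1 hin => (h i hi1 (by omega)).symm) hrun)

lemma measurableSet_setOf_waitingTime_eq_succ (m : ℕ) :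
    MeasurableSet {ω | waitingTime k ω = m + 1} := by
  rw [setOf_waitingTime_eq_succ]
  exact (dependsOnFirst_noRunUpTo m).measurableSet.inter (dependsOnFirst_runEndsAt _).measurableSet

lemma setOf_waitingTime_eq_self (hk : 1 ≤ k) :
    {ω | waitingTime k ω = k} = {ω | ∀ i ∈ Ioc 0 k, ω i = true} := by
  obtain ⟨m, rfl⟩ : ∃ m, k = m + 1 := ⟨k - 1, by omega⟩
  ext ω
  have hIcc : Icc (m + 1 - (m + 1) + 1) (m + 1) = Ioc 0 (m + 1) := by
    ext i
    simp only [mem_Icc, mem_Ioc]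
    omega
  simp only [Set.mem_ofPred_eq, waitingTime_eq_succ_iff, runEndsAt, hIcc, le_refl, true_and,
    and_iff_right_iff_imp]
  exact fun _ n hn hrun => by have := hrun.1; omega

lemma setOf_waitingTime_eq_add (m : ℕ) :
    {ω | waitingTime k ω = m + k + 1}
      = noRunUpTo k m ∩ {ω | ω (m + 1) = false}
          ∩ {ω | ∀ i ∈ Ioc (m + 1) (m + 1 + k), ω i = true} := by
  ext ω
  simp only [Set.mem_inter_iff, Set.mem_ofPred_eq, waitingTime_eq_succ_iff]
  constructor
  · rintro ⟨hno, -, hrun⟩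
    refine ⟨⟨fun n hn => hno n (by omega), ?_⟩,
      fun i hi => hrun i (by simp only [mem_Ioc, mem_Icc] at hi ⊢; omega)⟩
    rw [← Bool.not_eq_true]
    refine fun htrue => hno (m + k) le_rfl ⟨by omega, fun i hi => ?_⟩
    have hi' := mem_Icc.1 hi
    rcases Nat.lt_or_ge (m + 1) i with h | h
    · exact hrun i (mem_Icc.2 ⟨by omega, by omega⟩)
    · rwa [show i = m + 1 by omega]
  · rintro ⟨⟨hno, hfalse⟩, hrun⟩
    refine ⟨fun n hn hr => ?_, by omega,
      fun i hi => hrun i (by simp only [mem_Ioc, mem_Icc] at hi ⊢; omega)⟩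
    rcases le_or_gt n m with h | h
    · exact hno n h hr
    · have hkn := hr.1
      have := hr.2 (m + 1) (mem_Icc.2 ⟨by omega, by omega⟩)
      rw [hfalse] at this
      exact Bool.false_ne_true this

variable {μ : Measure (ℕ → Bool)} {w : Bool → ℝ≥0∞}

lemma measure_setOf_waitingTime_eq_self (hμ : HasProductCylinders μ w)
    [IsProbabilityMeasure μ] (hk : 1 ≤ k) :
    μ {ω | waitingTime k ω = k} = w true ^ k := by
  have h := hμ.measure_inter_forall_Ioc (show DependsOnFirst 0 Set.univ from fun _ _ _ h => h)
    true k
  rwa [Set.univ_inter, zero_add, measure_univ, one_mul, ← setOf_waitingTime_eq_self hk] at h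

lemma measure_setOf_waitingTime_eq_add (hμ : HasProductCylinders μ w) (m : ℕ) :
    μ {ω | waitingTime k ω = m + k + 1} = μ (noRunUpTo k m) * (w false * w true ^ k) := by
  have hno := dependsOnFirst_noRunUpTo (k := k) m
  rw [setOf_waitingTime_eq_add, hμ.measure_inter_forall_Ioc (hno.inter_eval_succ false),
    hμ.measure_inter_eval_succ hno, mul_assoc]

lemma measure_noRunUpTo_eq_add (m : ℕ) :
    μ (noRunUpTo k m) = μ (noRunUpTo k (m + 1)) + μ {ω | waitingTime k ω = m + 1} := by
  rw [noRunUpTo_succ, setOf_waitingTime_eq_succ, add_comm,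
    measure_inter_add_sdiff _ (dependsOnFirst_runEndsAt _).measurableSet]

lemma measure_setOf_waitingTime_recursion (hμ : HasProductCylinders μ w) (m : ℕ) :
    μ {ω | waitingTime k ω = m + k + 1}
      = μ {ω | waitingTime k ω = m + 1 + k + 1}
        + w false * w true ^ k * μ {ω | waitingTime k ω = m + 1} := by
  rw [measure_setOf_waitingTime_eq_add hμ, measure_setOf_waitingTime_eq_add hμ,
    measure_noRunUpTo_eq_add m]
  ring

lemma measure_setOf_waitingTime_eq_zero (hμ : HasProductCylinders μ w) [IsFiniteMeasure μ]
    (hk : 1 ≤ k) (hw : w false * w true ^ k ≠ 0) :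
    μ {ω | waitingTime k ω = 0} = 0 := by
  have hsum : ∑' n, μ {ω | waitingTime k ω = n + 1} ≠ ∞ := by
    rw [← measure_iUnion (fun a b hab => Set.disjoint_left.2 fun ω ha hb => hab (by
      simp only [Set.mem_ofPred_eq] at ha hb; omega)) measurableSet_setOf_waitingTime_eq_succ]
    exact measure_ne_top μ _
  have htend : Tendsto (fun m => μ (noRunUpTo k m) * (w false * w true ^ k)) atTop (𝓝 0) := by
    have := (tendsto_add_atTop_iff_nat k).2 (ENNReal.tendsto_atTop_zero_of_tsum_ne_top hsum)
    simpa only [measure_setOf_waitingTime_eq_add hμ] using this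
  have hle : μ {ω | waitingTime k ω = 0} * (w false * w true ^ k) ≤ 0 :=
    ge_of_tendsto' htend fun m => mul_le_mul_left
      (measure_mono (setOf_waitingTime_eq_zero_subset hk m)) _
  exact (mul_eq_zero.1 (nonpos_iff_eq_zero.1 hle)).resolve_right hw

end WaitingTime

theorem stmt7 (p : ℝ) (hp0 : 0 < p) (hp1 : p < 1) (k : ℕ) (hk : 1 ≤ k)
    (μ : Measure (ℕ → Bool)) [IsProbabilityMeasure μ]
    (hμ : ∀ (n : ℕ) (b : ℕ → Bool),
      μ {ω | ∀ i, 1 ≤ i → i ≤ n → ω i = b i}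
        = ENNReal.ofReal (∏ i ∈ Finset.Icc 1 n, if b i = true then p else 1 - p)) :
    (∀ v : ℕ, v < k → (μ {ω | waitingTime k ω = v}).toReal = 0) ∧
    (μ {ω | waitingTime k ω = k}).toReal = p ^ k ∧
    (μ {ω | waitingTime k ω = k + 1}).toReal = (1 - p) * p ^ k ∧
    (∀ v : ℕ, k + 1 < v →
      (μ {ω | waitingTime k ω = v}).toReal
        = (μ {ω | waitingTime k ω = v - 1}).toReal
          - p ^ k * (1 - p) * (μ {ω | waitingTime k ω = v - k - 1}).toReal) := by
  set w : Bool → ℝ≥0∞ := fun b => ENNReal.ofReal (if b then p else 1 - p)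
  have hμw : HasProductCylinders μ w := hasProductCylinders_of_measure_cylinder hp0.le hp1.le hμ
  have hw : w false * w true ^ k ≠ 0 := by simp [w, hp0, hp1]
  have hc : (w false * w true ^ k).toReal = (1 - p) * p ^ k := by
    simp only [w, Bool.false_eq_true, if_false, if_true]
    rw [ENNReal.toReal_mul, ENNReal.toReal_pow, ENNReal.toReal_ofReal hp0.le,
      ENNReal.toReal_ofReal (by linarith)]
  refine ⟨fun v hv => ?_, ?_, ?_, fun v hv => ?_⟩
  · rcases Nat.eq_zero_or_pos v with rfl | hv0
    · rw [measure_setOf_waitingTime_eq_zero hμw hk hw, ENNReal.toReal_zero]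
    · obtain ⟨m, rfl⟩ : ∃ m, v = m + 1 := ⟨v - 1, by omega⟩
      rw [setOf_waitingTime_eq_succ_of_lt hv, measure_empty, ENNReal.toReal_zero]
  · rw [measure_setOf_waitingTime_eq_self hμw hk]
    simp [w, hp0.le]
  · have h := measure_setOf_waitingTime_eq_add hμw (k := k) 0
    rw [zero_add, noRunUpTo_zero hk, measure_univ, one_mul] at h
    simpa [h] using hc
  · obtain ⟨m, rfl⟩ : ∃ m, v = m + 1 + k + 1 := ⟨v - k - 2, by omega⟩
    have h := congrArg ENNReal.toReal (measure_setOf_waitingTime_recursion hμw (k := k) m)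
    rw [ENNReal.toReal_add (measure_ne_top _ _) (by finiteness), ENNReal.toReal_mul, hc] at h
    rw [show m + 1 + k + 1 - 1 = m + k + 1 by omega, show m + 1 + k + 1 - k - 1 = m + 1 by omega,
      h]
    ring
end

section
/- Fix an integer k ≥ 1. The probability mass function of V(k) satisfies P(V(k) = v) = q·∑_{i=1}^{k} p^{i−1}·P(V(k) = v−i) for every integer v > 2k, together with the initial conditions P(V(k) = v) = 0 for 0 ≤ v < k, P(V(k) = k) = p^k, and P(V(k) = v) = q·p^k for k+1 ≤ v ≤ 2k. -/
open MeasureTheory Finset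

namespace St8

/-! ### Patterns on ℕ -/

def Rrun (k m : ℕ) (c : ℕ → Bool) : Prop := ∀ j, m - k ≤ j → j < m → c j = true

def QQ (k v : ℕ) (c : ℕ → Bool) : Prop :=
  Rrun k v c ∧ ∀ m, k ≤ m → m < v → ¬ Rrun k m c

lemma Rrun_congr {k m : ℕ} {c c' : ℕ → Bool} (h : ∀ j, j < m → c j = c' j) :
    Rrun k m c ↔ Rrun k m c' := by
  constructor <;> intro hr j h1 h2
  · rw [← h j h2]; exact hr j h1 h2
  · rw [h j h2]; exact hr j h1 h2

lemma QQ_congr {k v : ℕ} {c c' : ℕ → Bool} (h : ∀ j, j < v → c j = c' j) :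
    QQ k v c ↔ QQ k v c' := by
  unfold QQ
  rw [Rrun_congr h]
  constructor <;> rintro ⟨h1, h2⟩ <;> refine ⟨h1, fun m hm1 hm2 => ?_⟩
  · rw [← Rrun_congr (fun j hj => h j (by omega))]; exact h2 m hm1 hm2
  · rw [Rrun_congr (fun j hj => h j (by omega))]; exact h2 m hm1 hm2

lemma QQ_self {k : ℕ} (hk : 1 ≤ k) (c : ℕ → Bool) :
    QQ k k c ↔ ∀ j, j < k → c j = true := by
  constructor
  · intro ⟨h1, _⟩ j hj; exact h1 j (by omega) hj
  · intro h
    exact ⟨fun j h1 h2 => h j h2,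
      fun m hm1 hm2 => absurd (le_trans hm1 (le_of_lt hm2)) (by omega)⟩

lemma QQ_mid {k v : ℕ} (hk : 1 ≤ k) (h1 : k + 1 ≤ v) (h2 : v ≤ 2 * k) (c : ℕ → Bool) :
    QQ k v c ↔ (c (v - k - 1) = false ∧ ∀ j, v - k ≤ j → j < v → c j = true) := by
  constructor
  · rintro ⟨hr, hno⟩
    refine ⟨?_, fun j hj1 hj2 => hr j hj1 hj2⟩
    by_contra hfb
    have hft : c (v - k - 1) = true := by
      cases hc : c (v - k - 1)
      · exact absurd hc hfb
      · rfl
    apply hno (v - 1) (by omega) (by omega)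
    intro j hj1 hj2
    rcases Nat.lt_or_ge j (v - k) with hlt | hge
    · have : j = v - k - 1 := by omega
      rw [this]; exact hft
    · exact hr j hge (by omega)
  · rintro ⟨hf, ht⟩
    refine ⟨fun j hj1 hj2 => ht j hj1 hj2, fun m hm1 hm2 hr => ?_⟩
    have := hr (v - k - 1) (by omega) (by omega)
    rw [hf] at this
    exact Bool.false_ne_true this

def shiftc (i : ℕ) (c : ℕ → Bool) : ℕ → Bool := fun j => c (i + j)

def CondC (k i v : ℕ) (c : ℕ → Bool) : Prop :=
  (∀ j, j + 1 < i → c j = true) ∧ c (i - 1) = false ∧ QQ k (v - i) (shiftc i c)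

lemma QQ_large {k v : ℕ} (hk : 1 ≤ k) (hv : 2 * k < v) (c : ℕ → Bool) :
    QQ k v c ↔ ∃ i, 1 ≤ i ∧ i ≤ k ∧ CondC k i v c := by
  constructor
  · rintro ⟨hr, hno⟩
    classical
    have hexn : ∃ n, n < k ∧ c n = false := by
      by_contra hall
      push_neg at hall
      apply hno k le_rfl (by omega)
      intro j hj1 hj2
      have h2 := hall j hj2
      cases hc : c j
      · exact absurd hc h2
      · rfl
    obtain ⟨hnk, hnf⟩ := Nat.find_spec hexn
    refine ⟨Nat.find hexn + 1, by omega, by omega, ?_, ?_, ?_, ?_⟩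
    · intro j hj
      have hmin := Nat.find_min hexn (m := j) (by omega)
      cases hc : c j
      · exact absurd (⟨by omega, hc⟩ : j < k ∧ c j = false) hmin
      · rfl
    · simpa using hnf
    · intro j hj1 hj2
      exact hr (Nat.find hexn + 1 + j) (by omega) (by omega)
    · intro m hm1 hm2 hrun
      apply hno (m + (Nat.find hexn + 1)) (by omega) (by omega)
      intro j hj1 hj2
      have hji : Nat.find hexn + 1 ≤ j := by omega
      have := hrun (j - (Nat.find hexn + 1)) (by omega) (by omega)
      simpa [shiftc, show Nat.find hexn + 1 + (j - (Nat.find hexn + 1)) = j by omega] using this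
  · rintro ⟨i, hi1, hi2, hpre, hf, hq1, hq2⟩
    constructor
    · intro j hj1 hj2
      have := hq1 (j - i) (by omega) (by omega)
      simpa [shiftc, show i + (j - i) = j by omega] using this
    · intro m hm1 hm2 hrun
      rcases Nat.lt_or_ge m (k + i) with hlt | hge
      · have := hrun (i - 1) (by omega) (by omega)
        rw [hf] at this; exact Bool.false_ne_true this
      · apply hq2 (m - i) (by omega) (by omega)
        intro j hj1 hj2
        exact hrun (i + j) (by omega) (by omega)

lemma CondC_exclusive {k v : ℕ} {i i' : ℕ} (hi : 1 ≤ i) (hi' : 1 ≤ i') (hne : i ≠ i')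
    (c : ℕ → Bool) (h : CondC k i v c) (h' : CondC k i' v c) : False := by
  rcases Nat.lt_or_ge i i' with hlt | hge
  · have := h'.1 (i - 1) (by omega)
    rw [h.2.1] at this; exact Bool.false_ne_true this
  · have hlt : i' < i := by omega
    have := h.1 (i' - 1) (by omega)
    rw [h'.2.1] at this; exact Bool.false_ne_true this

/-! ### Finite patterns, padding, combining -/

def pad {n : ℕ} (b : Fin n → Bool) : ℕ → Bool :=
  fun j => if h : j < n then b ⟨j, h⟩ else false

def combine {m r : ℕ} (b1 : Fin m → Bool) (b2 : Fin r → Bool) : Fin (m + r) → Bool :=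
  fun j => if h : (j : ℕ) < m then b1 ⟨j, h⟩ else b2 ⟨(j : ℕ) - m, by omega⟩

def front {m r : ℕ} (b : Fin (m + r) → Bool) : Fin m → Bool :=
  fun j => b ⟨j, by omega⟩

def back {m r : ℕ} (b : Fin (m + r) → Bool) : Fin r → Bool :=
  fun j => b ⟨m + j, by omega⟩

lemma front_combine {m r : ℕ} (b1 : Fin m → Bool) (b2 : Fin r → Bool) :
    front (combine b1 b2) = b1 := by
  funext j
  simp only [front, combine]
  rw [dif_pos j.isLt]

lemma back_combine {m r : ℕ} (b1 : Fin m → Bool) (b2 : Fin r → Bool) :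
    back (combine b1 b2) = b2 := by
  funext j
  simp only [back, combine]
  rw [dif_neg (by omega)]
  congr 1
  exact Fin.ext (by simp only [Nat.add_sub_cancel_left])

lemma combine_front_back {m r : ℕ} (b : Fin (m + r) → Bool) :
    combine (front b) (back b) = b := by
  funext j
  simp only [front, back, combine]
  by_cases h : (j : ℕ) < m
  · rw [dif_pos h]
  · rw [dif_neg h]
    exact congrArg b (Fin.ext (by simp only []; omega))

lemma pad_combine {m r : ℕ} (b1 : Fin m → Bool) (b2 : Fin r → Bool) (j : ℕ) :
    pad (combine b1 b2) j = if j < m then pad b1 j else pad b2 (j - m) := by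
  by_cases h : j < m
  · rw [if_pos h]
    simp only [pad, combine]
    rw [dif_pos (by omega), dif_pos h, dif_pos h]
  · rw [if_neg h]
    by_cases h2 : j < m + r
    · simp only [pad, combine]
      rw [dif_pos h2, dif_neg (by omega), dif_pos (by omega)]
    · simp only [pad]
      rw [dif_neg h2, dif_neg (by omega)]

def combineEquiv (m r : ℕ) : ((Fin m → Bool) × (Fin r → Bool)) ≃ (Fin (m + r) → Bool) where
  toFun q := combine q.1 q.2
  invFun b := (front b, back b)
  left_inv q := by simp [front_combine, back_combine]
  right_inv b := combine_front_back b

lemma sum_combine {M : Type*} [AddCommMonoid M] {m r : ℕ} (F : (Fin (m + r) → Bool) → M) :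
    ∑ b : Fin (m + r) → Bool, F b
      = ∑ b1 : Fin m → Bool, ∑ b2 : Fin r → Bool, F (combine b1 b2) := by
  rw [← Equiv.sum_comp (combineEquiv m r) F]
  rw [Fintype.sum_prod_type]
  rfl

lemma prod_combine (p : ℝ) {m r : ℕ} (b1 : Fin m → Bool) (b2 : Fin r → Bool) :
    (∏ j : Fin (m + r), if combine b1 b2 j = true then p else 1 - p)
      = (∏ j : Fin m, if b1 j = true then p else 1 - p)
        * ∏ j : Fin r, if b2 j = true then p else 1 - p := by
  rw [Fin.prod_univ_add]
  congr 1
  · apply Finset.prod_congr rfl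
    intro j _
    congr 2
    simp only [combine, Fin.coe_castAdd]
    rw [dif_pos j.isLt]
  · apply Finset.prod_congr rfl
    intro j _
    congr 2
    simp only [combine, Fin.coe_natAdd]
    rw [dif_neg (by omega)]
    exact congrArg b2 (Fin.ext (by simp only [Nat.add_sub_cancel_left]))

lemma sum_all (p : ℝ) (n : ℕ) :
    ∑ b : Fin n → Bool, ∏ j : Fin n, (if b j = true then p else 1 - p) = 1 := by
  have h := Finset.prod_univ_sum (fun _ : Fin n => (Finset.univ : Finset Bool))
    (fun _ c => if c = true then p else 1 - p)
  rw [Fintype.piFinset_univ] at h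
  rw [← h]
  have : ∀ i : Fin n, (∑ c : Bool, if c = true then p else 1 - p) = 1 := by
    intro i
    simp [Fintype.sum_bool]
  rw [Finset.prod_congr rfl (fun i _ => this i), Finset.prod_const_one]

lemma sum_split (p : ℝ) {m r : ℕ} (C : (Fin m → Bool) → (Fin r → Bool) → Prop)
    (A : (Fin m → Bool) → Prop) (B : (Fin r → Bool) → Prop)
    [∀ b1 b2, Decidable (C b1 b2)] [DecidablePred A] [DecidablePred B]
    (h : ∀ b1 b2, C b1 b2 ↔ (A b1 ∧ B b2)) :
    (∑ b1 : Fin m → Bool, ∑ b2 : Fin r → Bool,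
        (if C b1 b2 then ∏ j : Fin (m + r), (if combine b1 b2 j = true then p else 1 - p) else 0))
      = (∑ b1 : Fin m → Bool, if A b1 then ∏ j : Fin m, (if b1 j = true then p else 1 - p) else 0)
        * ∑ b2 : Fin r → Bool, if B b2 then ∏ j : Fin r, (if b2 j = true then p else 1 - p) else 0 := by
  rw [Finset.sum_mul_sum]
  apply Finset.sum_congr rfl
  intro b1 _
  apply Finset.sum_congr rfl
  intro b2 _
  by_cases hA : A b1
  · by_cases hB : B b2
    · rw [if_pos ((h b1 b2).2 ⟨hA, hB⟩), if_pos hA, if_pos hB, prod_combine]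
    · rw [if_neg (fun hc => hB ((h b1 b2).1 hc).2), if_pos hA, if_neg hB, mul_zero]
  · rw [if_neg (fun hc => hA ((h b1 b2).1 hc).1), if_neg hA, zero_mul]

/-! ### Key sums -/

lemma sum_eq_pattern {n : ℕ} (f : (Fin n → Bool) → ℝ) (P : (Fin n → Bool) → Prop)
    [DecidablePred P] (a : Fin n → Bool) (h : ∀ b, P b ↔ b = a) :
    (∑ b : Fin n → Bool, if P b then f b else 0) = f a := by
  rw [Finset.sum_eq_single a (fun b _ hne => if_neg (fun hp => hne ((h b).1 hp)))
    (fun hmem => absurd (Finset.mem_univ a) hmem)]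
  exact if_pos ((h a).2 rfl)

open scoped Classical in
lemma sum_self (p : ℝ) {k : ℕ} (hk : 1 ≤ k) :
    (∑ b : Fin k → Bool,
        if QQ k k (pad b) then ∏ j : Fin k, (if b j = true then p else 1 - p) else 0) = p ^ k := by
  have hiff : ∀ b : Fin k → Bool, QQ k k (pad b) ↔ b = (fun _ => true) := by
    intro b
    rw [QQ_self hk]
    constructor
    · intro h
      funext j
      have := h j j.isLt
      simpa [pad, j.isLt] using this
    · intro h j hj
      rw [h]
      simp [pad, hj]
  rw [sum_eq_pattern (fun b => ∏ j : Fin k, (if b j = true then p else 1 - p))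
    (fun b => QQ k k (pad b)) (fun _ => true) hiff]
  simp

open scoped Classical in
lemma sum_notall (p : ℝ) {k : ℕ} (hk : 1 ≤ k) :
    (∑ b : Fin k → Bool,
        if ¬ Rrun k k (pad b) then ∏ j : Fin k, (if b j = true then p else 1 - p) else 0)
      = 1 - p ^ k := by
  have hiff : ∀ b : Fin k → Bool, Rrun k k (pad b) ↔ b = (fun _ => true) := by
    intro b
    constructor
    · intro h
      funext j
      have := h j (by omega) j.isLt
      simpa [pad, j.isLt] using this
    · intro h j hj1 hj2
      rw [h]
      simp [pad, hj2]
  have : ∀ b : Fin k → Bool,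
      (if ¬ Rrun k k (pad b) then ∏ j : Fin k, (if b j = true then p else 1 - p) else 0)
        = (∏ j : Fin k, (if b j = true then p else 1 - p))
          - (if b = (fun _ => true) then ∏ j : Fin k, (if b j = true then p else 1 - p) else 0) := by
    intro b
    by_cases h : Rrun k k (pad b)
    · rw [if_neg (by simpa using h), if_pos ((hiff b).1 h)]
      ring
    · rw [if_pos h, if_neg (fun he => h ((hiff b).2 he))]
      ring
  rw [Finset.sum_congr rfl (fun b _ => this b), Finset.sum_sub_distrib, sum_all]
  rw [sum_eq_pattern (fun b => ∏ j : Fin k, (if b j = true then p else 1 - p))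
    (fun b => b = (fun _ => true)) (fun _ => true) (fun b => Iff.rfl)]
  simp

open scoped Classical in
lemma sum_mid (p : ℝ) {k : ℕ} (hk : 1 ≤ k) (m : ℕ) (h2 : m + (k + 1) ≤ 2 * k) :
    (∑ b : Fin (m + (k + 1)) → Bool,
        if QQ k (m + (k + 1)) (pad b)
        then ∏ j : Fin (m + (k + 1)), (if b j = true then p else 1 - p) else 0)
      = (1 - p) * p ^ k := by
  rw [sum_combine]
  have hiff : ∀ (b1 : Fin m → Bool) (b2 : Fin (k + 1) → Bool),
      QQ k (m + (k + 1)) (pad (combine b1 b2))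
        ↔ (True ∧ b2 = (fun j : Fin (k + 1) => decide (0 < (j : ℕ)))) := by
    intro b1 b2
    rw [QQ_mid hk (by omega) h2]
    have e1 : m + (k + 1) - k - 1 = m := by omega
    rw [e1]
    constructor
    · rintro ⟨hf, ht⟩
      refine ⟨trivial, ?_⟩
      funext j
      rcases Nat.eq_zero_or_pos (j : ℕ) with h0 | h0
      · have : pad (combine b1 b2) m = pad b2 0 := by
          rw [pad_combine, if_neg (by omega), Nat.sub_self]
        rw [this] at hf
        have hj0 : j = (0 : Fin (k + 1)) := Fin.ext (by simpa using h0)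
        rw [hj0]
        simpa [pad] using hf
      · have hj := ht (m + (j : ℕ)) (by omega) (by omega)
        rw [pad_combine, if_neg (by omega)] at hj
        simp only [Nat.add_sub_cancel_left] at hj
        have : pad b2 (j : ℕ) = b2 j := by simp [pad, j.isLt]
        rw [this] at hj
        rw [hj]
        simp [h0]
    · rintro ⟨-, hb2⟩
      subst hb2
      constructor
      · rw [pad_combine, if_neg (by omega), Nat.sub_self]
        simp [pad]
      · intro j hj1 hj2
        rw [pad_combine, if_neg (by omega)]
        have hlt : j - m < k + 1 := by omega
        simp [pad, hlt, show 0 < j - m by omega]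
  rw [sum_split p _ (fun _ => True) (fun b2 => b2 = (fun j : Fin (k + 1) => decide (0 < (j : ℕ)))) hiff]
  simp only [if_true]
  rw [sum_all p m, one_mul]
  refine Eq.trans (sum_eq_pattern (fun b2 => ∏ j : Fin (k + 1), (if b2 j = true then p else 1 - p))
    _ (fun j : Fin (k + 1) => decide (0 < (j : ℕ))) (fun b => Iff.rfl)) ?_
  beta_reduce
  rw [Fin.prod_univ_succ]
  have hrest : ∀ j : Fin k,
      (if (fun j : Fin (k + 1) => decide (0 < (j : ℕ))) j.succ = true then p else 1 - p) = p := by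
    intro j
    simp
  rw [Finset.prod_congr rfl (fun j _ => hrest j), Finset.prod_const]
  simp

open scoped Classical in
lemma sum_condC (p : ℝ) {k : ℕ} (hk : 1 ≤ k) (i r : ℕ) (hi : 1 ≤ i) :
    (∑ b : Fin (i + r) → Bool,
        if CondC k i (i + r) (pad b)
        then ∏ j : Fin (i + r), (if b j = true then p else 1 - p) else 0)
      = p ^ (i - 1) * (1 - p)
        * ∑ b2 : Fin r → Bool,
            if QQ k r (pad b2) then ∏ j : Fin r, (if b2 j = true then p else 1 - p) else 0 := by
  rw [sum_combine]
  have hshift : ∀ (b1 : Fin i → Bool) (b2 : Fin r → Bool),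
      shiftc i (pad (combine b1 b2)) = pad b2 := by
    intro b1 b2
    funext j
    simp only [shiftc]
    rw [pad_combine, if_neg (by omega)]
    simp only [Nat.add_sub_cancel_left]
  have hiff : ∀ (b1 : Fin i → Bool) (b2 : Fin r → Bool),
      CondC k i (i + r) (pad (combine b1 b2))
        ↔ (b1 = (fun j : Fin i => decide ((j : ℕ) + 1 < i)) ∧ QQ k r (pad b2)) := by
    intro b1 b2
    simp only [CondC, Nat.add_sub_cancel_left, hshift b1 b2]
    constructor
    · rintro ⟨hpre, hf, hq⟩
      refine ⟨?_, hq⟩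
      funext j
      by_cases hj : (j : ℕ) + 1 < i
      · have := hpre (j : ℕ) hj
        rw [pad_combine, if_pos (by omega)] at this
        have hb : pad b1 (j : ℕ) = b1 j := by simp [pad, j.isLt]
        rw [hb] at this
        rw [this]
        simp [hj]
      · have hj' : (j : ℕ) = i - 1 := by omega
        rw [pad_combine, if_pos (by omega)] at hf
        have hb : pad b1 (i - 1) = b1 j := by
          simp only [pad]
          rw [dif_pos (by omega)]
          congr 1
          exact Fin.ext (by simp only []; omega)
        rw [hb] at hf
        rw [hf]
        simp [hj]
    · rintro ⟨hb1, hq⟩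
      subst hb1
      refine ⟨?_, ?_, hq⟩
      · intro j hj
        rw [pad_combine, if_pos (by omega)]
        have hjlt : j < i := by omega
        simp [pad, hjlt, hj]
      · rw [pad_combine, if_pos (by omega)]
        have hlt : i - 1 < i := by omega
        simp only [pad]
        rw [dif_pos hlt]
        simp only [decide_eq_false_iff_not]
        omega
  rw [sum_split p _ (fun b1 => b1 = (fun j : Fin i => decide ((j : ℕ) + 1 < i)))
    (fun b2 => QQ k r (pad b2)) hiff]
  congr 1
  refine Eq.trans (sum_eq_pattern (fun b1 => ∏ j : Fin i, (if b1 j = true then p else 1 - p))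
    _ (fun j : Fin i => decide ((j : ℕ) + 1 < i)) (fun b => Iff.rfl)) ?_
  obtain ⟨i', rfl⟩ : ∃ i', i = i' + 1 := ⟨i - 1, by omega⟩
  beta_reduce
  rw [Fin.prod_univ_castSucc]
  have hrest : ∀ j : Fin i',
      (if (fun j : Fin (i' + 1) => decide ((j : ℕ) + 1 < i' + 1)) j.castSucc = true
        then p else 1 - p) = p := by
    intro j
    have : ((j.castSucc : Fin (i' + 1)) : ℕ) = (j : ℕ) := rfl
    simp [this, j.isLt]
  rw [Finset.prod_congr rfl (fun j _ => hrest j), Finset.prod_const]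
  simp

open scoped Classical in
lemma sum_blocks (p : ℝ) {k : ℕ} (hk : 1 ≤ k) (N : ℕ) :
    (∑ b : Fin (N * k) → Bool,
        if (∀ l, l < N → ¬ Rrun k ((l + 1) * k) (pad b))
        then ∏ j : Fin (N * k), (if b j = true then p else 1 - p) else 0)
      = (1 - p ^ k) ^ N := by
  induction N with
  | zero =>
    have hc : ∀ b : Fin (0 * k) → Bool, (∀ l, l < 0 → ¬ Rrun k ((l + 1) * k) (pad b)) :=
      fun b l hl => absurd hl (Nat.not_lt_zero l)
    rw [Finset.sum_congr rfl (fun b _ => if_pos (hc b)), sum_all p (0 * k), pow_zero]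
  | succ N ih =>
    rw [show (N + 1) * k = N * k + k from by ring]
    rw [sum_combine]
    have hmul : (N + 1) * k = N * k + k := by ring
    have hiff : ∀ (b1 : Fin (N * k) → Bool) (b2 : Fin k → Bool),
        (∀ l, l < N + 1 → ¬ Rrun k ((l + 1) * k) (pad (combine b1 b2)))
          ↔ ((∀ l, l < N → ¬ Rrun k ((l + 1) * k) (pad b1)) ∧ ¬ Rrun k k (pad b2)) := by
      intro b1 b2
      have hcong : ∀ l, l < N → (Rrun k ((l + 1) * k) (pad (combine b1 b2))
          ↔ Rrun k ((l + 1) * k) (pad b1)) := by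
        intro l hl
        have hle : (l + 1) * k ≤ N * k := Nat.mul_le_mul_right k (by omega)
        exact Rrun_congr (fun j hj => by rw [pad_combine, if_pos (by omega)])
      have hlast : Rrun k ((N + 1) * k) (pad (combine b1 b2)) ↔ Rrun k k (pad b2) := by
        constructor
        · intro hr j hj1 hj2
          have := hr (N * k + j) (by omega) (by omega)
          rwa [pad_combine, if_neg (by omega), Nat.add_sub_cancel_left] at this
        · intro hr j hj1 hj2
          rw [pad_combine, if_neg (by omega)]
          exact hr (j - N * k) (by omega) (by omega)
      constructor
      · intro h
        refine ⟨fun l hl hr => h l (by omega) ((hcong l hl).2 hr),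
          fun hr => h N (by omega) (hlast.2 hr)⟩
      · rintro ⟨h1, h2⟩ l hl hr
        rcases Nat.lt_or_ge l N with hlN | hlN
        · exact h1 l hlN ((hcong l hlN).1 hr)
        · have : l = N := by omega
          subst this
          exact h2 (hlast.1 hr)
    refine Eq.trans (sum_split p _ _ _ hiff) ?_
    rw [ih, sum_notall p hk, pow_succ]

/-! ### From measure hypothesis to sums -/

def ext (n : ℕ) (b : Fin n → Bool) : ℕ → Bool :=
  fun i => if h : 1 ≤ i ∧ i ≤ n then b ⟨i - 1, by omega⟩ else false

lemma prod_ext (p : ℝ) (n : ℕ) (b : Fin n → Bool) :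
    (∏ i ∈ Finset.Icc 1 n, if ext n b i = true then p else 1 - p)
      = ∏ j : Fin n, if b j = true then p else 1 - p := by
  rw [← Finset.Ico_add_one_right_eq_Icc, Finset.prod_Ico_eq_prod_range]
  rw [show n + 1 - 1 = n from rfl]
  rw [← Fin.prod_univ_eq_prod_range (fun i => if ext n b (1 + i) = true then p else 1 - p) n]
  apply Finset.prod_congr rfl
  intro j _
  congr 1
  have h : 1 ≤ 1 + (j : ℕ) ∧ 1 + (j : ℕ) ≤ n := by omega
  simp only [ext, dif_pos h]
  exact congrArg (fun x => b x = true) (Fin.ext (by simp only []; omega))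

open scoped Classical in
lemma measure_proj (p : ℝ) (hp0 : 0 < p) (hp1 : p < 1)
    (μ : Measure (ℕ → Bool)) [IsProbabilityMeasure μ]
    (hμ : ∀ (n : ℕ) (b : ℕ → Bool),
      μ {ω | ∀ i, 1 ≤ i → i ≤ n → ω i = b i}
        = ENNReal.ofReal (∏ i ∈ Finset.Icc 1 n, if b i = true then p else 1 - p))
    (n : ℕ) (Q : (Fin n → Bool) → Prop) :
    (μ {ω | Q (fun j => ω ((j : ℕ) + 1))}).toReal
      = ∑ b : Fin n → Bool, if Q b then (∏ j : Fin n, if b j = true then p else 1 - p) else 0 := by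
  have hw : ∀ (c : Bool), (0:ℝ) ≤ if c = true then p else 1 - p := by
    intro c; cases c <;> simp <;> linarith
  have hprodnn : ∀ b : Fin n → Bool, (0:ℝ) ≤ ∏ j : Fin n, if b j = true then p else 1 - p :=
    fun b => Finset.prod_nonneg (fun j _ => hw (b j))
  have hdecomp : {ω : ℕ → Bool | Q (fun j => ω ((j : ℕ) + 1))}
      = ⋃ b ∈ (Finset.univ.filter Q : Finset (Fin n → Bool)),
          {ω : ℕ → Bool | (fun j : Fin n => ω ((j : ℕ) + 1)) = b} := by
    ext ω
    simp only [Set.mem_setOf_eq, Set.mem_iUnion, Finset.mem_filter, Finset.mem_univ, true_and]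
    constructor
    · intro h; exact ⟨fun j => ω ((j : ℕ) + 1), h, rfl⟩
    · rintro ⟨b, hb, hproj⟩; rwa [hproj]
  have hmeas : ∀ b : Fin n → Bool,
      MeasurableSet {ω : ℕ → Bool | (fun j : Fin n => ω ((j : ℕ) + 1)) = b} := by
    intro b
    have : {ω : ℕ → Bool | (fun j : Fin n => ω ((j : ℕ) + 1)) = b}
        = ⋂ j : Fin n, (fun ω : ℕ → Bool => ω ((j : ℕ) + 1)) ⁻¹' {b j} := by
      ext ω
      simp [funext_iff]
    rw [this]
    exact MeasurableSet.iInter fun j => (measurable_pi_apply _) (MeasurableSet.singleton _)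
  have hdisj : Set.PairwiseDisjoint (↑(Finset.univ.filter Q : Finset (Fin n → Bool)))
      (fun b => {ω : ℕ → Bool | (fun j : Fin n => ω ((j : ℕ) + 1)) = b}) := by
    intro b _ b' _ hne
    apply Set.disjoint_left.2
    intro ω h1 h2
    exact hne (h1.symm.trans h2)
  have hcyl : ∀ b : Fin n → Bool,
      μ {ω : ℕ → Bool | (fun j : Fin n => ω ((j : ℕ) + 1)) = b}
        = ENNReal.ofReal (∏ j : Fin n, if b j = true then p else 1 - p) := by
    intro b
    have hset : {ω : ℕ → Bool | (fun j : Fin n => ω ((j : ℕ) + 1)) = b}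
        = {ω : ℕ → Bool | ∀ i, 1 ≤ i → i ≤ n → ω i = ext n b i} := by
      ext ω
      simp only [Set.mem_setOf_eq, funext_iff]
      constructor
      · intro h i h1 h2
        have := h ⟨i - 1, by omega⟩
        simp only at this
        rw [show i - 1 + 1 = i by omega] at this
        rw [this, ext, dif_pos ⟨h1, h2⟩]
      · intro h j
        have h1 : 1 ≤ (j : ℕ) + 1 := by omega
        have h2 : (j : ℕ) + 1 ≤ n := by omega
        rw [h _ h1 h2, ext, dif_pos ⟨h1, h2⟩]
        exact congrArg b (Fin.ext (by simp only [Nat.add_sub_cancel]))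
    rw [hset, hμ n (ext n b), prod_ext]
  rw [hdecomp, measure_biUnion_finset hdisj (fun b _ => hmeas b)]
  rw [ENNReal.toReal_sum (fun b _ => by rw [hcyl b]; exact ENNReal.ofReal_ne_top)]
  rw [Finset.sum_congr rfl (fun b _ => by rw [hcyl b, ENNReal.toReal_ofReal (hprodnn b)])]
  rw [Finset.sum_filter]

/-! ### Correspondence with the waiting time -/

lemma pad_proj {n : ℕ} (ω : ℕ → Bool) (j : ℕ) (hj : j < n) :
    pad (fun j : Fin n => ω ((j : ℕ) + 1)) j = ω (j + 1) := by
  simp [pad, hj]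

lemma run_iff {k : ℕ} (ω : ℕ → Bool) (m : ℕ) (hm : 1 ≤ m) :
    (∀ i ∈ Finset.Icc (m - k + 1) m, ω i = true) ↔ Rrun k m (fun j => ω (j + 1)) := by
  constructor
  · intro h j hj1 hj2
    exact h (j + 1) (Finset.mem_Icc.2 (by omega))
  · intro h i hi
    rw [Finset.mem_Icc] at hi
    have := h (i - 1) (by omega) (by omega)
    simpa [show i - 1 + 1 = i by omega] using this

lemma waiting_eq_iff {k v : ℕ} (hk : 1 ≤ k) (hv : k ≤ v) (ω : ℕ → Bool) :
    waitingTime k ω = v ↔ QQ k v (fun j => ω (j + 1)) := by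
  set S : Set ℕ := {n | k ≤ n ∧ ∀ i ∈ Finset.Icc (n - k + 1) n, ω i = true} with hS
  have hmemS : ∀ n, n ∈ S ↔ (k ≤ n ∧ ∀ i ∈ Finset.Icc (n - k + 1) n, ω i = true) :=
    fun n => Iff.rfl
  constructor
  · intro h
    have hne : S.Nonempty := by
      by_contra hemp
      rw [Set.not_nonempty_iff_eq_empty] at hemp
      rw [waitingTime, ← hS, hemp, Nat.sInf_empty] at h
      omega
    have hvS : v ∈ S := by
      rw [← h]; exact Nat.sInf_mem hne
    obtain ⟨hkv, hrv⟩ := (hmemS v).1 hvS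
    refine ⟨(run_iff ω v (by omega)).1 hrv, fun m hm1 hm2 hrun => ?_⟩
    have : m ∉ S := Nat.notMem_of_lt_sInf (by rw [waitingTime, ← hS] at h; omega)
    exact this ((hmemS m).2 ⟨hm1, (run_iff ω m (by omega)).2 hrun⟩)
  · rintro ⟨h1, h2⟩
    have hvS : v ∈ S := (hmemS v).2 ⟨hv, (run_iff ω v (by omega)).2 h1⟩
    have hle : sInf S ≤ v := Nat.sInf_le hvS
    have hmem := Nat.sInf_mem ⟨v, hvS⟩
    rw [waitingTime, ← hS]
    by_contra hne
    have hlt : sInf S < v := by omega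
    obtain ⟨hk1, hk2⟩ := (hmemS _).1 hmem
    exact h2 (sInf S) hk1 hlt ((run_iff ω (sInf S) (by omega)).1 hk2)

lemma event_eq {k v : ℕ} (hk : 1 ≤ k) (hv : k ≤ v) :
    {ω : ℕ → Bool | waitingTime k ω = v}
      = {ω : ℕ → Bool |
          (fun b : Fin v → Bool => QQ k v (pad b)) (fun j : Fin v => ω ((j : ℕ) + 1))} := by
  ext ω
  simp only [Set.mem_setOf_eq]
  rw [waiting_eq_iff hk hv ω]
  exact QQ_congr (fun j hj => (pad_proj ω j hj).symm)

open scoped Classical in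
lemma waiting_toReal (p : ℝ) (hp0 : 0 < p) (hp1 : p < 1)
    (μ : Measure (ℕ → Bool)) [IsProbabilityMeasure μ]
    (hμ : ∀ (n : ℕ) (b : ℕ → Bool),
      μ {ω | ∀ i, 1 ≤ i → i ≤ n → ω i = b i}
        = ENNReal.ofReal (∏ i ∈ Finset.Icc 1 n, if b i = true then p else 1 - p))
    {k : ℕ} (hk : 1 ≤ k) (v : ℕ) (hv : k ≤ v) :
    (μ {ω | waitingTime k ω = v}).toReal
      = ∑ b : Fin v → Bool,
          if QQ k v (pad b) then (∏ j : Fin v, if b j = true then p else 1 - p) else 0 := by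
  rw [event_eq hk hv]
  exact measure_proj p hp0 hp1 μ hμ v (fun b : Fin v → Bool => QQ k v (pad b))

end St8

theorem stmt8 (p : ℝ) (hp0 : 0 < p) (hp1 : p < 1) (k : ℕ) (hk : 1 ≤ k)
    (μ : Measure (ℕ → Bool)) [IsProbabilityMeasure μ]
    (hμ : ∀ (n : ℕ) (b : ℕ → Bool),
      μ {ω | ∀ i, 1 ≤ i → i ≤ n → ω i = b i}
        = ENNReal.ofReal (∏ i ∈ Finset.Icc 1 n, if b i = true then p else 1 - p)) :
    (∀ v : ℕ, v < k → (μ {ω | waitingTime k ω = v}).toReal = 0) ∧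
    (μ {ω | waitingTime k ω = k}).toReal = p ^ k ∧
    (∀ v : ℕ, k + 1 ≤ v → v ≤ 2 * k →
      (μ {ω | waitingTime k ω = v}).toReal = (1 - p) * p ^ k) ∧
    (∀ v : ℕ, 2 * k < v →
      (μ {ω | waitingTime k ω = v}).toReal
        = (1 - p) * ∑ i ∈ Finset.Icc 1 k,
            p ^ (i - 1) * (μ {ω | waitingTime k ω = v - i}).toReal) := by
  classical
  have hpk1 : p ^ k < 1 := pow_lt_one₀ (le_of_lt hp0) hp1 (by omega)
  have hpk0 : (0:ℝ) < p ^ k := pow_pos hp0 k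
  refine ⟨?_, ?_, ?_, ?_⟩
  · -- v < k
    intro v hv
    rcases Nat.eq_zero_or_pos v with rfl | hv1
    · -- v = 0
      have hbound : ∀ N : ℕ, (μ {ω | waitingTime k ω = 0}).toReal ≤ (1 - p ^ k) ^ N := by
        intro N
        have hsub : {ω : ℕ → Bool | waitingTime k ω = 0}
            ⊆ {ω : ℕ → Bool |
                (fun b : Fin (N * k) → Bool =>
                  ∀ l, l < N → ¬ St8.Rrun k ((l + 1) * k) (St8.pad b))
                (fun j : Fin (N * k) => ω ((j : ℕ) + 1))} := by
          intro ω h0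
          simp only [Set.mem_setOf_eq] at h0 ⊢
          intro l hl hr
          have hle : (l + 1) * k ≤ N * k := Nat.mul_le_mul_right k (by omega)
          have hrun : St8.Rrun k ((l + 1) * k) (fun j => ω (j + 1)) :=
            (St8.Rrun_congr (fun j hj => St8.pad_proj ω j (by omega))).1 hr
          have hmem : ((l + 1) * k) ∈
              {n | k ≤ n ∧ ∀ i ∈ Finset.Icc (n - k + 1) n, ω i = true} := by
            refine ⟨Nat.le_mul_of_pos_left k (by omega), ?_⟩
            have h1m : 1 ≤ (l + 1) * k := by
              have := Nat.mul_pos (show 0 < l + 1 by omega) (show 0 < k by omega)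
              omega
            exact (St8.run_iff ω _ h1m).2 hrun
          rw [waitingTime] at h0
          rcases Nat.sInf_eq_zero.1 h0 with hin | hempty
          · have : k ≤ 0 := hin.1
            omega
          · rw [Set.eq_empty_iff_forall_notMem] at hempty
            exact hempty _ hmem
        have h1 : (μ {ω | waitingTime k ω = 0}).toReal
            ≤ (μ {ω : ℕ → Bool |
                (fun b : Fin (N * k) → Bool =>
                  ∀ l, l < N → ¬ St8.Rrun k ((l + 1) * k) (St8.pad b))
                (fun j : Fin (N * k) => ω ((j : ℕ) + 1))}).toReal :=
          ENNReal.toReal_mono (measure_ne_top μ _) (measure_mono hsub)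
        rw [St8.measure_proj p hp0 hp1 μ hμ (N * k)
          (fun b : Fin (N * k) → Bool => ∀ l, l < N → ¬ St8.Rrun k ((l + 1) * k) (St8.pad b))]
          at h1
        refine h1.trans (le_of_eq (Eq.trans (Finset.sum_congr rfl (fun b _ => ?_))
          (St8.sum_blocks p hk N)))
        by_cases hcb : ∀ l, l < N → ¬ St8.Rrun k ((l + 1) * k) (St8.pad b)
        · rw [if_pos hcb]; rw [if_pos hcb]
        · rw [if_neg hcb]; rw [if_neg hcb]
      have hlim : Filter.Tendsto (fun N : ℕ => (1 - p ^ k) ^ N) Filter.atTop (nhds 0) :=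
        tendsto_pow_atTop_nhds_zero_of_lt_one (by linarith) (by linarith)
      have hle0 : (μ {ω | waitingTime k ω = 0}).toReal ≤ 0 := ge_of_tendsto' hlim hbound
      exact le_antisymm hle0 ENNReal.toReal_nonneg
    · -- 1 ≤ v < k
      have hempty : {ω : ℕ → Bool | waitingTime k ω = v} = ∅ := by
        rw [Set.eq_empty_iff_forall_notMem]
        intro ω h
        simp only [Set.mem_setOf_eq, waitingTime] at h
        rcases Set.eq_empty_or_nonempty
          {n | k ≤ n ∧ ∀ i ∈ Finset.Icc (n - k + 1) n, ω i = true} with he | hne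
        · rw [he, Nat.sInf_empty] at h
          omega
        · have hmem := Nat.sInf_mem hne
          rw [h] at hmem
          have : k ≤ v := hmem.1
          omega
      rw [hempty]
      simp
  · -- v = k
    rw [St8.waiting_toReal p hp0 hp1 μ hμ hk k le_rfl, St8.sum_self p hk]
  · -- k + 1 ≤ v ≤ 2k
    intro v hv1 hv2
    obtain ⟨m, rfl⟩ : ∃ m, v = m + (k + 1) := ⟨v - (k + 1), by omega⟩
    rw [St8.waiting_toReal p hp0 hp1 μ hμ hk _ (by omega), St8.sum_mid p hk m (by omega)]
  · -- recursion
    intro v hv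
    rw [St8.waiting_toReal p hp0 hp1 μ hμ hk v (by omega)]
    have hrw : ∀ i ∈ Finset.Icc 1 k,
        p ^ (i - 1) * (μ {ω | waitingTime k ω = v - i}).toReal
          = p ^ (i - 1) * ∑ b2 : Fin (v - i) → Bool,
              if St8.QQ k (v - i) (St8.pad b2)
              then (∏ j : Fin (v - i), if b2 j = true then p else 1 - p) else 0 := by
      intro i hi
      rw [Finset.mem_Icc] at hi
      rw [St8.waiting_toReal p hp0 hp1 μ hμ hk (v - i) (by omega)]
    rw [Finset.sum_congr rfl hrw]
    have key : ∀ b : Fin v → Bool,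
        (if St8.QQ k v (St8.pad b)
          then (∏ j : Fin v, if b j = true then p else 1 - p) else 0)
          = ∑ i ∈ Finset.Icc 1 k,
              (if St8.CondC k i v (St8.pad b)
                then (∏ j : Fin v, if b j = true then p else 1 - p) else 0) := by
      intro b
      by_cases hq : St8.QQ k v (St8.pad b)
      · obtain ⟨i0, hi01, hi0k, hc⟩ := (St8.QQ_large hk hv (St8.pad b)).1 hq
        rw [if_pos hq]
        rw [Finset.sum_eq_single_of_mem i0 (Finset.mem_Icc.2 ⟨hi01, hi0k⟩)
          (fun i hi hne => by
            rw [Finset.mem_Icc] at hi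
            exact if_neg (fun hc' => St8.CondC_exclusive hi.1 hi01 hne _ hc' hc))]
        exact (if_pos hc).symm
      · rw [if_neg hq]
        symm
        apply Finset.sum_eq_zero
        intro i hi
        rw [Finset.mem_Icc] at hi
        exact if_neg (fun hc => hq ((St8.QQ_large hk hv (St8.pad b)).2 ⟨i, hi.1, hi.2, hc⟩))
    rw [Finset.sum_congr rfl (fun b _ => key b), Finset.sum_comm, Finset.mul_sum]
    apply Finset.sum_congr rfl
    intro i hi
    rw [Finset.mem_Icc] at hi
    obtain ⟨r, rfl⟩ : ∃ r, v = i + r := ⟨v - i, by omega⟩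
    rw [show i + r - i = r from by omega]
    rw [St8.sum_condC p hk i r hi.1]
    ring
end
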